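/- arXiv:2211.16831 — 7 statements merged into one kernel-verified Lean document; each statement's English description precedes it below -/
import Mathlib

section
/- Assume μ(x) ≥ μ_min > 0 for all x∈V and a:V→ℝ satisfies (A₁) and (A₂). Then the embedding of ℋ into L^p(V) is compact for all 2 ≤ p ≤ ∞: every sequence {u_k} ⊂ ℋ with sup_k ‖u_k‖_ℋ < ∞ has a subsequence and a limit u ∈ ℋ such that u_k(x) → u(x) for every x ∈ V and ‖u_k − u‖_p → 0 for every p ∈ [2,∞]. -/
open Filter Real Topology

noncomputable section

/-- Sum of `f` over the neighbours of `x`. -/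
def nbrSum {V : Type*} (Adj : V → V → Prop) (f : V → ℝ) (x : V) : ℝ :=
  ∑' y : {y : V // Adj x y}, f y.1

/-- The squared length of the gradient `|∇u|²(x)`. -/
def gradSq {V : Type*} (μ : V → ℝ) (ω : V → V → ℝ) (Adj : V → V → Prop)
    (u : V → ℝ) (x : V) : ℝ :=
  (1 / (2 * μ x)) * nbrSum Adj (fun y => ω x y * (u y - u x) ^ 2) x

/-- The gradient form `Γ(u,v)(x)`. -/
def gammaG {V : Type*} (μ : V → ℝ) (ω : V → V → ℝ) (Adj : V → V → Prop)
    (u v : V → ℝ) (x : V) : ℝ :=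
  (1 / (2 * μ x)) * nbrSum Adj (fun y => ω x y * (u y - u x) * (v y - v x)) x

/-- The graph Laplacian `Δu(x)`. -/
def lapG {V : Type*} (μ : V → ℝ) (ω : V → V → ℝ) (Adj : V → V → Prop)
    (u : V → ℝ) (x : V) : ℝ :=
  (1 / μ x) * nbrSum Adj (fun y => ω x y * (u y - u x)) x

/-- `G = (V,E)` is a connected locally finite graph with symmetric positive
edge weights `ω` (the adjacency relation `Adj` records `y ∼ x`). -/
def GoodGraph {V : Type*} (Adj : V → V → Prop) (ω : V → V → ℝ) : Prop :=
  (∀ x y, Adj x y → Adj y x) ∧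
  (∀ x y, Adj x y → ω x y = ω y x) ∧
  (∀ x y, Adj x y → 0 < ω x y) ∧
  (∀ x, {y | Adj x y}.Finite) ∧
  (∀ x y, Relation.ReflTransGen Adj x y)

/-- `u ∈ ℋ` : both `∫_V (|∇u|² + u²) dμ < ∞` and `∫_V a u² dμ < ∞`. -/
def memH {V : Type*} (μ : V → ℝ) (ω : V → V → ℝ) (Adj : V → V → Prop)
    (a : V → ℝ) (u : V → ℝ) : Prop :=
  Summable (fun x => μ x * (gradSq μ ω Adj u x + u x ^ 2)) ∧
  Summable (fun x => μ x * (a x * u x ^ 2))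

/-- `‖u‖_ℋ = (∫_V (|∇u|² + (a+1)u²) dμ)^{1/2}`. -/
def normH {V : Type*} (μ : V → ℝ) (ω : V → V → ℝ) (Adj : V → V → Prop)
    (a : V → ℝ) (u : V → ℝ) : ℝ :=
  Real.sqrt (∑' x, μ x * (gradSq μ ω Adj u x + (a x + 1) * u x ^ 2))

/-- `u ∈ 𝒟 = {u ∈ ℋ : ∫_V u²|log u²| dμ < ∞}`. -/
def memD {V : Type*} (μ : V → ℝ) (ω : V → V → ℝ) (Adj : V → V → Prop)
    (a : V → ℝ) (u : V → ℝ) : Prop :=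
  memH μ ω Adj a u ∧ Summable (fun x => μ x * (u x ^ 2 * |Real.log (u x ^ 2)|))

/-- The energy functional `J(u) = ½‖u‖_ℋ² − ½∫_V u² log u² dμ`. -/
def JFun {V : Type*} (μ : V → ℝ) (ω : V → V → ℝ) (Adj : V → V → Prop)
    (a : V → ℝ) (u : V → ℝ) : ℝ :=
  (1 / 2) * (∑' x, μ x * (gradSq μ ω Adj u x + (a x + 1) * u x ^ 2)) -
    (1 / 2) * ∑' x, μ x * (u x ^ 2 * Real.log (u x ^ 2))

/-- The directional derivative
`J'(u)·v = ∫_V (Γ(u,v) + a u v) dμ − ∫_V u v log u² dμ`. -/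
def JDer {V : Type*} (μ : V → ℝ) (ω : V → V → ℝ) (Adj : V → V → Prop)
    (a : V → ℝ) (u v : V → ℝ) : ℝ :=
  (∑' x, μ x * (gammaG μ ω Adj u v x + a x * u x * v x)) -
    ∑' x, μ x * (u x * v x * Real.log (u x ^ 2))

/-- The Nehari manifold `𝒩 = {u ∈ 𝒟 \ {0} : J'(u)·u = 0}`. -/
def Nehari {V : Type*} (μ : V → ℝ) (ω : V → V → ℝ) (Adj : V → V → Prop)
    (a : V → ℝ) (u : V → ℝ) : Prop :=
  memD μ ω Adj a u ∧ u ≠ 0 ∧ JDer μ ω Adj a u u = 0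

/-- `d = inf_{u ∈ 𝒩} J(u)`. -/
def groundLevel {V : Type*} (μ : V → ℝ) (ω : V → V → ℝ) (Adj : V → V → Prop)
    (a : V → ℝ) : ℝ :=
  sInf {c : ℝ | ∃ u : V → ℝ, Nehari μ ω Adj a u ∧ JFun μ ω Adj a u = c}

private lemma gradSq_nonneg' {V : Type*} (μ : V → ℝ) (ω : V → V → ℝ) (Adj : V → V → Prop)
    (hμ : ∀ x, 0 < μ x) (hω : ∀ x y, Adj x y → 0 < ω x y) (v : V → ℝ) (x : V) :
    0 ≤ gradSq μ ω Adj v x := by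
  have h1 : (0:ℝ) ≤ 1 / (2 * μ x) := div_nonneg zero_le_one (by linarith [hμ x])
  refine mul_nonneg h1 (tsum_nonneg fun y => ?_)
  exact mul_nonneg (hω x y.1 y.2).le (sq_nonneg _)

private lemma gradSq_tendsto' {V : Type*} (μ : V → ℝ) (ω : V → V → ℝ) (Adj : V → V → Prop)
    (hfin : ∀ x, {y | Adj x y}.Finite)
    (f : ℕ → V → ℝ) (g : V → ℝ)
    (hconv : ∀ x, Filter.Tendsto (fun n => f n x) Filter.atTop (nhds (g x))) (x : V) :
    Filter.Tendsto (fun n => gradSq μ ω Adj (f n) x) Filter.atTop (nhds (gradSq μ ω Adj g x)) := by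
  have : Fintype {y : V // Adj x y} := (hfin x).fintype
  simp only [gradSq, nbrSum, tsum_fintype]
  refine Filter.Tendsto.const_mul _ (tendsto_finset_sum _ fun y _ => ?_)
  exact (((hconv y.1).sub (hconv x)).pow 2).const_mul (ω x y.1)

set_option maxHeartbeats 2000000 in
/-- under `(A₁)` and `(A₂)`, `ℋ` is compactly embedded in `L^p(V)`
for all `2 ≤ p ≤ ∞`. -/
theorem compact_embedding_A2
    {V : Type*} [Countable V] (Adj : V → V → Prop) (ω : V → V → ℝ) (μ a : V → ℝ)
    (μmin : ℝ) (hμmin : 0 < μmin) (hμ : ∀ x, μmin ≤ μ x)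
    (hG : GoodGraph Adj ω)
    (hA1 : ∃ a₀ : ℝ, -1 < a₀ ∧ a₀ < 0 ∧ ∀ x, a₀ ≤ a x)
    (hA2 : ∀ M : ℝ, 0 < M → Summable (fun x : {x : V // a x ≤ M} => μ x.1))
    (u : ℕ → V → ℝ) (hu : ∀ k, memH μ ω Adj a (u k))
    (hbdd : ∃ C : ℝ, ∀ k, normH μ ω Adj a (u k) ≤ C) :
    ∃ φ : ℕ → ℕ, StrictMono φ ∧ ∃ w : V → ℝ, memH μ ω Adj a w ∧
      (∀ x, Tendsto (fun k => u (φ k) x) atTop (𝓝 (w x))) ∧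
      (∀ p : ℝ, 2 ≤ p →
        Tendsto (fun k => (∑' x, μ x * |u (φ k) x - w x| ^ p) ^ (1 / p)) atTop (𝓝 0)) ∧
      Tendsto (fun k => ⨆ x, |u (φ k) x - w x|) atTop (𝓝 0) := by
  classical
  obtain ⟨a₀, ha₀m, ha₀0, ha₀⟩ := hA1
  obtain ⟨C, hC⟩ := hbdd
  have hC0 : 0 ≤ C := le_trans (Real.sqrt_nonneg _) (hC 0)
  have hμpos : ∀ x, 0 < μ x := fun x => lt_of_lt_of_le hμmin (hμ x)
  have hω := hG.2.2.1
  have hfin := hG.2.2.2.1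
  have hgs : ∀ (v : V → ℝ) (x : V), 0 ≤ gradSq μ ω Adj v x :=
    gradSq_nonneg' μ ω Adj hμpos hω
  set c₀ : ℝ := a₀ + 1 with hc₀def
  have hc₀ : 0 < c₀ := by simp only [hc₀def]; linarith
  have hax : ∀ x, c₀ ≤ a x + 1 := fun x => by have := ha₀ x; simp only [hc₀def]; linarith
  set F : (V → ℝ) → V → ℝ :=
    fun v x => μ x * (gradSq μ ω Adj v x + (a x + 1) * v x ^ 2) with hFdef
  have hFnn : ∀ v x, 0 ≤ F v x := fun v x =>
    mul_nonneg (hμpos x).le (add_nonneg (hgs v x)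
      (mul_nonneg (by have := hax x; linarith) (sq_nonneg _)))
  have hFsum : ∀ v, memH μ ω Adj a v → Summable (F v) := by
    intro v hv
    have h := hv.1.add hv.2
    refine h.congr fun x => ?_
    simp only [hFdef]; ring
  have hEC : ∀ k, ∑' x, F (u k) x ≤ C ^ 2 := by
    intro k
    have h1 : Real.sqrt (∑' x, F (u k) x) ≤ C := hC k
    have h2 : (0:ℝ) ≤ ∑' x, F (u k) x := tsum_nonneg fun x => hFnn _ x
    calc ∑' x, F (u k) x = Real.sqrt (∑' x, F (u k) x) ^ 2 := (Real.sq_sqrt h2).symm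
      _ ≤ C ^ 2 := pow_le_pow_left₀ (Real.sqrt_nonneg _) h1 2
  set B : ℝ := Real.sqrt (C ^ 2 / (μmin * c₀)) with hBdef
  have hB0 : 0 ≤ B := Real.sqrt_nonneg _
  have hptw : ∀ k x, |u k x| ≤ B := by
    intro k x
    have h1 : μmin * c₀ * u k x ^ 2 ≤ F (u k) x := by
      have h2 : μmin * c₀ ≤ μ x * (a x + 1) :=
        mul_le_mul (hμ x) (hax x) hc₀.le (hμpos x).le
      have h3 := hgs (u k) x
      have h4 := sq_nonneg (u k x)
      have h5 := (hμpos x).le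
      simp only [hFdef]
      nlinarith
    have h2 : F (u k) x ≤ ∑' y, F (u k) y :=
      Summable.le_tsum (hFsum _ (hu k)) x fun y _ => hFnn _ y
    have h3 : u k x ^ 2 ≤ C ^ 2 / (μmin * c₀) := by
      rw [le_div_iff₀ (by positivity)]
      have := hEC k
      nlinarith
    calc |u k x| = Real.sqrt (u k x ^ 2) := (Real.sqrt_sq_eq_abs _).symm
      _ ≤ B := Real.sqrt_le_sqrt h3
  -- extraction of a pointwise convergent subsequence
  have hset : {f : V → ℝ | ∀ x, f x ∈ Set.Icc (-B) B} =
      Set.pi Set.univ fun _ : V => Set.Icc (-B) B := by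
    ext f
    constructor
    · intro h x _; exact h x
    · intro h x; exact h x (Set.mem_univ x)
  have hcpt : IsCompact {f : V → ℝ | ∀ x, f x ∈ Set.Icc (-B) B} := by
    rw [hset]; exact isCompact_univ_pi fun _ => isCompact_Icc
  obtain ⟨w, hw, φ, hφ, hconv'⟩ := hcpt.tendsto_subseq
    (x := u) (fun k x => by
      have := abs_le.1 (hptw k x); exact ⟨this.1, this.2⟩)
  have hconv : ∀ x, Tendsto (fun k => u (φ k) x) atTop (𝓝 (w x)) :=
    fun x => (tendsto_pi_nhds.1 hconv') x
  have hwB : ∀ x, |w x| ≤ B := fun x => abs_le.2 ⟨(hw x).1, (hw x).2⟩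
  -- convergence of the local quantities
  have hgconv : ∀ x, Tendsto (fun k => gradSq μ ω Adj (u (φ k)) x) atTop
      (𝓝 (gradSq μ ω Adj w x)) :=
    gradSq_tendsto' μ ω Adj hfin (fun k => u (φ k)) w hconv
  have hFconv : ∀ x, Tendsto (fun k => F (u (φ k)) x) atTop (𝓝 (F w x)) := by
    intro x
    exact ((hgconv x).add (((hconv x).pow 2).const_mul (a x + 1))).const_mul (μ x)
  -- w ∈ ℋ
  have hFwle : ∀ s : Finset V, ∑ x ∈ s, F w x ≤ C ^ 2 := by
    intro s
    have hlim : Tendsto (fun k => ∑ x ∈ s, F (u (φ k)) x) atTop (𝓝 (∑ x ∈ s, F w x)) :=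
      tendsto_finset_sum _ fun x _ => hFconv x
    refine le_of_tendsto hlim (Eventually.of_forall fun k => ?_)
    exact le_trans (Summable.sum_le_tsum s (fun y _ => hFnn _ y) (hFsum _ (hu (φ k)))) (hEC (φ k))
  have hFwsum : Summable (F w) := summable_of_sum_le (fun x => hFnn w x) hFwle
  have hFwtsum : ∑' x, F w x ≤ C ^ 2 := Summable.tsum_le_of_sum_le hFwsum hFwle
  have hgw : Summable (fun x => μ x * gradSq μ ω Adj w x) := by
    refine Summable.of_nonneg_of_le (fun x => mul_nonneg (hμpos x).le (hgs w x))
      (fun x => ?_) hFwsum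
    simp only [hFdef]
    have h1 : (0:ℝ) ≤ (a x + 1) * w x ^ 2 :=
      mul_nonneg (by have := hax x; linarith) (sq_nonneg _)
    nlinarith [(hμpos x).le]
  have haw1 : Summable (fun x => μ x * ((a x + 1) * w x ^ 2)) := by
    refine Summable.of_nonneg_of_le (fun x => mul_nonneg (hμpos x).le
      (mul_nonneg (by have := hax x; linarith) (sq_nonneg _))) (fun x => ?_) hFwsum
    simp only [hFdef]
    nlinarith [(hμpos x).le, hgs w x]
  have hw2 : Summable (fun x => μ x * w x ^ 2) := by
    refine Summable.of_nonneg_of_le (fun x => mul_nonneg (hμpos x).le (sq_nonneg _))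
      (fun x => ?_) (haw1.mul_left (1 / c₀))
    have h1 : c₀ * (μ x * w x ^ 2) ≤ (a x + 1) * (μ x * w x ^ 2) :=
      mul_le_mul_of_nonneg_right (hax x) (mul_nonneg (hμpos x).le (sq_nonneg _))
    rw [one_div_mul_eq_div, le_div_iff₀ hc₀]
    nlinarith
  have hmemw : memH μ ω Adj a w := by
    constructor
    · refine (hgw.add hw2).congr fun x => ?_; ring
    · refine (haw1.sub hw2).congr fun x => ?_; ring
  -- summability facts for the u k
  have hgk : ∀ k, Summable (fun x => μ x * u k x ^ 2) := by
    intro k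
    refine Summable.of_nonneg_of_le (fun x => mul_nonneg (hμpos x).le (sq_nonneg _))
      (fun x => ?_) (hu k).1
    nlinarith [(hμpos x).le, hgs (u k) x, sq_nonneg (u k x)]
  have hgsk : ∀ k, Summable (fun x => μ x * gradSq μ ω Adj (u k) x) := by
    intro k
    refine Summable.of_nonneg_of_le (fun x => mul_nonneg (hμpos x).le (hgs (u k) x))
      (fun x => ?_) (hu k).1
    nlinarith [(hμpos x).le, hgs (u k) x, sq_nonneg (u k x)]
  have hak1 : ∀ k, Summable (fun x => μ x * ((a x + 1) * u k x ^ 2)) := by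
    intro k
    refine ((hFsum _ (hu k)).sub (hgsk k)).congr fun x => ?_
    simp only [hFdef]; ring
  have hak1le : ∀ k, ∑' x, μ x * ((a x + 1) * u k x ^ 2) ≤ C ^ 2 := by
    intro k
    refine le_trans (Summable.tsum_le_tsum (fun x => ?_) (hak1 k) (hFsum _ (hu k))) (hEC k)
    simp only [hFdef]
    nlinarith [(hμpos x).le, hgs (u k) x]
  have haw1le : ∑' x, μ x * ((a x + 1) * w x ^ 2) ≤ C ^ 2 := by
    refine le_trans (Summable.tsum_le_tsum (fun x => ?_) haw1 hFwsum) hFwtsum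
    simp only [hFdef]
    nlinarith [(hμpos x).le, hgs w x]
  -- the difference sequence and its L² norms
  set v : ℕ → V → ℝ := fun k x => u (φ k) x - w x with hvdef
  have hvb : ∀ k x, |v k x| ≤ 2 * B := by
    intro k x
    have h1 := abs_le.1 (hptw (φ k) x)
    have h2 := abs_le.1 (hwB x)
    exact abs_le.2 ⟨by simp only [hvdef]; linarith, by simp only [hvdef]; linarith⟩
  have hvsq : ∀ k x, v k x ^ 2 ≤ 2 * u (φ k) x ^ 2 + 2 * w x ^ 2 := by
    intro k x
    simp only [hvdef]
    nlinarith [sq_nonneg (u (φ k) x + w x)]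
  have hvsum : ∀ k, Summable (fun x => μ x * v k x ^ 2) := by
    intro k
    refine Summable.of_nonneg_of_le (fun x => mul_nonneg (hμpos x).le (sq_nonneg _))
      (fun x => ?_) (((hgk (φ k)).mul_left 2).add (hw2.mul_left 2))
    have := hvsq k x
    nlinarith [(hμpos x).le]
  have hvasum : ∀ k, Summable (fun x => μ x * ((a x + 1) * v k x ^ 2)) := by
    intro k
    refine Summable.of_nonneg_of_le
      (fun x => mul_nonneg (hμpos x).le (mul_nonneg (by have := hax x; linarith) (sq_nonneg _)))
      (fun x => ?_) (((hak1 (φ k)).mul_left 2).add (haw1.mul_left 2))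
    have h1 := hvsq k x
    have h2 : (0:ℝ) ≤ a x + 1 := by have := hax x; linarith
    have key : μ x * ((a x + 1) * v k x ^ 2) ≤
        μ x * ((a x + 1) * (2 * u (φ k) x ^ 2 + 2 * w x ^ 2)) :=
      mul_le_mul_of_nonneg_left (mul_le_mul_of_nonneg_left h1 h2) (hμpos x).le
    refine le_trans key (le_of_eq (by ring))
  have hvale : ∀ k, ∑' x, μ x * ((a x + 1) * v k x ^ 2) ≤ 4 * C ^ 2 := by
    intro k
    have hsum2 : Summable (fun x => 2 * (μ x * ((a x + 1) * u (φ k) x ^ 2)) +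
        2 * (μ x * ((a x + 1) * w x ^ 2))) := ((hak1 (φ k)).mul_left 2).add (haw1.mul_left 2)
    have h1 : ∑' x, μ x * ((a x + 1) * v k x ^ 2) ≤
        ∑' x, (2 * (μ x * ((a x + 1) * u (φ k) x ^ 2)) + 2 * (μ x * ((a x + 1) * w x ^ 2))) := by
      refine Summable.tsum_le_tsum (fun x => ?_) (hvasum k) hsum2
      have h1 := hvsq k x
      have h2 : (0:ℝ) ≤ a x + 1 := by have := hax x; linarith
      have key : μ x * ((a x + 1) * v k x ^ 2) ≤
          μ x * ((a x + 1) * (2 * u (φ k) x ^ 2 + 2 * w x ^ 2)) :=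
        mul_le_mul_of_nonneg_left (mul_le_mul_of_nonneg_left h1 h2) (hμpos x).le
      refine le_trans key (le_of_eq (by ring))
    rw [Summable.tsum_add ((hak1 (φ k)).mul_left 2) (haw1.mul_left 2), tsum_mul_left, tsum_mul_left] at h1
    have := hak1le (φ k)
    linarith [haw1le]
  set S : ℕ → ℝ := fun k => ∑' x, μ x * v k x ^ 2 with hSdef
  have hS0 : ∀ k, 0 ≤ S k := fun k =>
    tsum_nonneg fun x => mul_nonneg (hμpos x).le (sq_nonneg _)
  have hStend : Tendsto S atTop (𝓝 0) := by
    rw [Metric.tendsto_atTop]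
    intro ε hε
    set M : ℝ := 8 * C ^ 2 / ε + 1 with hMdef
    have hM : 0 < M := by positivity
    set s : Set V := {x | a x ≤ M} with hsdef
    -- tail bound
    have htail : ∀ k, ∑' x : ↥sᶜ, μ x.1 * v k x.1 ^ 2 ≤ ε / 2 := by
      intro k
      have hsub : Summable (fun x : ↥sᶜ => μ x.1 * v k x.1 ^ 2) := (hvsum k).subtype _
      have hsuba : Summable (fun x : ↥sᶜ => μ x.1 * ((a x.1 + 1) * v k x.1 ^ 2)) :=
        (hvasum k).subtype _
      have h1 : ∑' x : ↥sᶜ, μ x.1 * v k x.1 ^ 2 ≤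
          (1 / (M + 1)) * ∑' x : ↥sᶜ, μ x.1 * ((a x.1 + 1) * v k x.1 ^ 2) := by
        rw [← tsum_mul_left]
        refine Summable.tsum_le_tsum (fun x => ?_) hsub (hsuba.mul_left _)
        have hx : M < a x.1 := not_le.1 x.2
        have h2 : (0:ℝ) ≤ μ x.1 * v k x.1 ^ 2 := mul_nonneg (hμpos _).le (sq_nonneg _)
        rw [one_div_mul_eq_div, le_div_iff₀ (by linarith)]
        nlinarith [(hμpos x.1).le, sq_nonneg (v k x.1)]
      have h2 : ∑' x : ↥sᶜ, μ x.1 * ((a x.1 + 1) * v k x.1 ^ 2) ≤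
          ∑' x, μ x * ((a x + 1) * v k x ^ 2) := by
        have hsplit := Summable.tsum_subtype_add_tsum_subtype_compl (hvasum k) s
        have h3 : (0:ℝ) ≤ ∑' x : ↥s, μ x.1 * ((a x.1 + 1) * v k x.1 ^ 2) :=
          tsum_nonneg fun x => mul_nonneg (hμpos _).le
            (mul_nonneg (by have := hax x.1; linarith) (sq_nonneg _))
        linarith
      have h3 : (1 / (M + 1)) * ∑' x : ↥sᶜ, μ x.1 * ((a x.1 + 1) * v k x.1 ^ 2) ≤
          (1 / (M + 1)) * (4 * C ^ 2) := by
        refine mul_le_mul_of_nonneg_left (le_trans h2 (hvale k)) (by positivity)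
      have h4 : (1 / (M + 1)) * (4 * C ^ 2) ≤ ε / 2 := by
        have key : ε / 2 * (8 * C ^ 2 / ε + 1 + 1) = 4 * C ^ 2 + ε := by
          field_simp; ring
        rw [one_div_mul_eq_div, div_le_iff₀ (by linarith : (0:ℝ) < M + 1), hMdef]
        linarith [key]
      linarith
    -- head tends to zero
    have hhead : Tendsto (fun k => ∑' x : ↥s, μ x.1 * v k x.1 ^ 2) atTop (𝓝 0) := by
      have hbound : Summable (fun x : ↥s => μ x.1 * (2 * B) ^ 2) := by
        exact (hA2 M hM).mul_right _
      have := tendsto_tsum_of_dominated_convergence (f := fun k (x : ↥s) => μ x.1 * v k x.1 ^ 2)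
        (g := fun x : ↥s => μ x.1 * (0:ℝ)) (bound := fun x : ↥s => μ x.1 * (2 * B) ^ 2)
        hbound
        (fun x => by
          have h := ((hconv x.1).sub (tendsto_const_nhds (x := w x.1))).pow 2
          have h2 : Tendsto (fun k => μ x.1 * v k x.1 ^ 2) atTop (𝓝 (μ x.1 * (w x.1 - w x.1) ^ 2)) :=
            h.const_mul (μ x.1)
          simpa using h2)
        (Eventually.of_forall fun k x => by
          have h1 : |v k x.1| ≤ 2 * B := hvb k x.1
          have h2 : v k x.1 ^ 2 ≤ (2 * B) ^ 2 := by
            rw [← sq_abs]; exact pow_le_pow_left₀ (abs_nonneg _) h1 2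
          rw [Real.norm_eq_abs, abs_of_nonneg (mul_nonneg (hμpos _).le (sq_nonneg _))]
          exact mul_le_mul_of_nonneg_left h2 (hμpos _).le)
      simpa using this
    obtain ⟨N, hN⟩ := (Metric.tendsto_atTop.1 hhead) (ε / 2) (by linarith)
    refine ⟨N, fun k hk => ?_⟩
    have hsplit := Summable.tsum_subtype_add_tsum_subtype_compl (hvsum k) s
    have hheadk := hN k hk
    rw [Real.dist_eq, sub_zero] at hheadk ⊢
    have hhead0 : (0:ℝ) ≤ ∑' x : ↥s, μ x.1 * v k x.1 ^ 2 :=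
      tsum_nonneg fun x => mul_nonneg (hμpos _).le (sq_nonneg _)
    have := htail k
    rw [abs_of_nonneg (hS0 k)]
    rw [abs_of_nonneg hhead0] at hheadk
    have hSk : S k = (∑' x : ↥s, μ x.1 * v k x.1 ^ 2) + ∑' x : ↥sᶜ, μ x.1 * v k x.1 ^ 2 :=
      hsplit.symm
    linarith
  -- sup-norm convergence
  have hbddv : ∀ k, BddAbove (Set.range fun x => |v k x|) := by
    intro k
    exact ⟨2 * B, by rintro _ ⟨x, rfl⟩; exact hvb k x⟩
  set D : ℕ → ℝ := fun k => ⨆ x, |v k x| with hDdef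
  have hDnn : ∀ k, 0 ≤ D k := fun k => Real.iSup_nonneg fun x => abs_nonneg _
  have hDub : ∀ k, D k ≤ 2 * B := fun k => Real.iSup_le (fun x => hvb k x) (by linarith [hB0])
  have hDge : ∀ k x, |v k x| ≤ D k := fun k x => le_ciSup (hbddv k) x
  have hD_le : ∀ k, D k ≤ Real.sqrt (S k / μmin) := by
    intro k
    refine Real.iSup_le (fun x => ?_) (Real.sqrt_nonneg _)
    have h1 : μmin * v k x ^ 2 ≤ μ x * v k x ^ 2 :=
      mul_le_mul_of_nonneg_right (hμ x) (sq_nonneg _)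
    have h2 : μ x * v k x ^ 2 ≤ S k :=
      Summable.le_tsum (hvsum k) x fun y _ => mul_nonneg (hμpos y).le (sq_nonneg _)
    have h3 : v k x ^ 2 ≤ S k / μmin := by
      rw [le_div_iff₀ hμmin]; nlinarith
    calc |v k x| = Real.sqrt (v k x ^ 2) := (Real.sqrt_sq_eq_abs _).symm
      _ ≤ _ := Real.sqrt_le_sqrt h3
  have hDtend : Tendsto D atTop (𝓝 0) := by
    refine squeeze_zero hDnn hD_le ?_
    have h1 : Tendsto (fun k => S k / μmin) atTop (𝓝 0) := by
      simpa using hStend.div_const μmin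
    have h2 := (Real.continuous_sqrt.tendsto 0).comp h1
    simpa [Function.comp_def] using h2
  -- L^p convergence
  have hLp : ∀ p : ℝ, 2 ≤ p →
      Tendsto (fun k => (∑' x, μ x * |u (φ k) x - w x| ^ p) ^ (1 / p)) atTop (𝓝 0) := by
    intro p hp
    have hp0 : (0:ℝ) < p := by linarith
    have hpt : ∀ k x, μ x * |v k x| ^ p ≤ D k ^ (p - 2) * (μ x * v k x ^ 2) := by
      intro k x
      rcases eq_or_ne (v k x) 0 with h | h
      · rw [h]
        simp [Real.zero_rpow (show p ≠ 0 by linarith)]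
      · have habs : 0 < |v k x| := abs_pos.2 h
        have key : |v k x| ^ p = |v k x| ^ (p - 2) * v k x ^ 2 := by
          rw [show p = (p - 2) + 2 by ring, Real.rpow_add habs, Real.rpow_two, sq_abs]
          ring_nf
        rw [key]
        have h2 : |v k x| ^ (p - 2) ≤ D k ^ (p - 2) :=
          Real.rpow_le_rpow (abs_nonneg _) (hDge k x) (by linarith)
        have h3 : (0:ℝ) ≤ μ x * v k x ^ 2 := mul_nonneg (hμpos x).le (sq_nonneg _)
        calc μ x * (|v k x| ^ (p - 2) * v k x ^ 2)
            = |v k x| ^ (p - 2) * (μ x * v k x ^ 2) := by ring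
          _ ≤ D k ^ (p - 2) * (μ x * v k x ^ 2) := mul_le_mul_of_nonneg_right h2 h3
    have hLpsum : ∀ k, Summable (fun x => μ x * |v k x| ^ p) := by
      intro k
      refine Summable.of_nonneg_of_le
        (fun x => mul_nonneg (hμpos x).le (Real.rpow_nonneg (abs_nonneg _) p))
        (hpt k) ((hvsum k).mul_left _)
    have hsum_le : ∀ k, ∑' x, μ x * |v k x| ^ p ≤ D k ^ (p - 2) * S k := by
      intro k
      calc ∑' x, μ x * |v k x| ^ p
          ≤ ∑' x, D k ^ (p - 2) * (μ x * v k x ^ 2) :=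
            Summable.tsum_le_tsum (hpt k) (hLpsum k) ((hvsum k).mul_left _)
        _ = D k ^ (p - 2) * S k := tsum_mul_left
    have hRtend : Tendsto (fun k => D k ^ (p - 2) * S k) atTop (𝓝 0) := by
      refine squeeze_zero (g := fun k => (2 * B + 1) ^ (p - 2) * S k)
        (fun k => mul_nonneg (Real.rpow_nonneg (hDnn k) _) (hS0 k))
        (fun k => mul_le_mul_of_nonneg_right
          (Real.rpow_le_rpow (hDnn k) (by linarith [hDub k]) (by linarith)) (hS0 k)) ?_
      simpa using hStend.const_mul ((2 * B + 1) ^ (p - 2))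
    have htsum : Tendsto (fun k => ∑' x, μ x * |v k x| ^ p) atTop (𝓝 0) :=
      squeeze_zero
        (fun k => tsum_nonneg fun x =>
          mul_nonneg (hμpos x).le (Real.rpow_nonneg (abs_nonneg _) p))
        hsum_le hRtend
    have hc : ContinuousAt (fun t : ℝ => t ^ (1 / p)) 0 :=
      Real.continuousAt_rpow_const 0 (1 / p) (Or.inr (by positivity))
    have hfinal := hc.tendsto.comp htsum
    simp only [Function.comp_def] at hfinal
    rw [Real.zero_rpow (show (1:ℝ) / p ≠ 0 by positivity)] at hfinal
    exact hfinal
  exact ⟨φ, hφ, w, hmemw, hconv, hLp, hDtend⟩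
end
end

section
/- Assume μ(x) ≥ μ_min > 0 for all x∈V and a:V→ℝ satisfies (A₁) and (A₂′). Then the embedding of ℋ into L^p(V) is compact for all 1 ≤ p ≤ ∞: every sequence {u_k} ⊂ ℋ with sup_k ‖u_k‖_ℋ < ∞ has a subsequence and a limit u ∈ ℋ such that u_k(x) → u(x) for every x ∈ V and ‖u_k − u‖_p → 0 for every p ∈ [1,∞]. -/
open Filter Real Topology

noncomputable section

lemma my_amgm (s d m : ℝ) (hs : 0 < s) (hm : 0 ≤ m) :
    m * |d| ≤ 1/2 * (m * (s * d ^ 2)) + 1/2 * (m / s) := by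
  have h6 : 2 * (s * |d|) ≤ s ^ 2 * d ^ 2 + 1 := by nlinarith [sq_nonneg (s * |d| - 1), sq_abs d]
  have h5 : 2 * |d| ≤ s * d ^ 2 + s⁻¹ := by
    refine (mul_le_mul_iff_right₀ hs).mp ?_
    calc s * (2 * |d|) = 2 * (s * |d|) := by ring
      _ ≤ s ^ 2 * d ^ 2 + 1 := h6
      _ = s * (s * d ^ 2 + s⁻¹) := by field_simp
  have h7 := mul_le_mul_of_nonneg_left h5 hm
  rw [div_eq_mul_inv m s]
  linarith

lemma my_tendsto_tsum_zero {V : Type*} (f : ℕ → V → ℝ)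
    (hnn : ∀ k x, 0 ≤ f k x) (hsum : ∀ k, Summable (f k))
    (hpt : ∀ x, Tendsto (fun k => f k x) atTop (𝓝 0))
    (htail : ∀ ε : ℝ, 0 < ε → ∃ F : Finset V, ∀ k, ∑' x : {x : V // x ∉ F}, f k x.1 ≤ ε) :
    Tendsto (fun k => ∑' x, f k x) atTop (𝓝 0) := by
  rw [Metric.tendsto_atTop]
  intro ε hε
  obtain ⟨F, hF⟩ := htail (ε/2) (by linarith)
  have hfin : Tendsto (fun k => ∑ x ∈ F, f k x) atTop (𝓝 0) := by
    have h := tendsto_finset_sum F (fun x (_ : x ∈ F) => hpt x)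
    simpa using h
  rw [Metric.tendsto_atTop] at hfin
  obtain ⟨N, hN⟩ := hfin (ε/4) (by linarith)
  refine ⟨N, fun k hk => ?_⟩
  have hsplit : ∑ x ∈ F, f k x + ∑' x : {x : V // x ∉ F}, f k x.1 = ∑' x, f k x :=
    Summable.sum_add_tsum_compl (hsum k)
  have h1 : |∑ x ∈ F, f k x - 0| < ε/4 := by simpa [Real.dist_eq] using hN k hk
  have h1' : ∑ x ∈ F, f k x < ε/4 := by
    rw [sub_zero] at h1; exact lt_of_le_of_lt (le_abs_self _) h1
  have h2 : (0:ℝ) ≤ ∑' x, f k x := tsum_nonneg (fun x => hnn k x)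
  rw [Real.dist_eq, sub_zero, abs_of_nonneg h2, ← hsplit]
  have := hF k
  linarith

set_option maxHeartbeats 2000000 in
/-- under `(A₁)` and `(A₂′)`, `ℋ` is compactly embedded in `L^p(V)`
for all `1 ≤ p ≤ ∞`. -/
theorem compact_embedding_A2'
    {V : Type*} [Countable V] (Adj : V → V → Prop) (ω : V → V → ℝ) (μ a : V → ℝ)
    (μmin : ℝ) (hμmin : 0 < μmin) (hμ : ∀ x, μmin ≤ μ x)
    (hG : GoodGraph Adj ω)
    (hA1 : ∃ a₀ : ℝ, -1 < a₀ ∧ a₀ < 0 ∧ ∀ x, a₀ ≤ a x)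
    (hA2' : ∃ M₀ : ℝ, 0 < M₀ ∧ Summable (fun x : {x : V // a x ≤ M₀} => μ x.1) ∧
      Summable (fun x : {x : V // M₀ < a x} => μ x.1 / a x.1))
    (u : ℕ → V → ℝ) (hu : ∀ k, memH μ ω Adj a (u k))
    (hbdd : ∃ C : ℝ, ∀ k, normH μ ω Adj a (u k) ≤ C) :
    ∃ φ : ℕ → ℕ, StrictMono φ ∧ ∃ w : V → ℝ, memH μ ω Adj a w ∧
      (∀ x, Tendsto (fun k => u (φ k) x) atTop (𝓝 (w x))) ∧
      (∀ p : ℝ, 1 ≤ p →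
        Tendsto (fun k => (∑' x, μ x * |u (φ k) x - w x| ^ p) ^ (1 / p)) atTop (𝓝 0)) ∧
      Tendsto (fun k => ⨆ x, |u (φ k) x - w x|) atTop (𝓝 0) := by
  obtain ⟨a₀, ha₀1, ha₀0, ha₀⟩ := hA1
  obtain ⟨M₀, hM₀pos, hDsum, hTsum⟩ := hA2'
  obtain ⟨C, hC⟩ := hbdd
  set ε₀ : ℝ := a₀ + 1 with hε₀def
  have hε₀ : 0 < ε₀ := by simp only [hε₀def]; linarith
  have haε : ∀ x, ε₀ ≤ a x + 1 := fun x => by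
    have := ha₀ x; simp only [hε₀def]; linarith
  have hμpos : ∀ x, 0 < μ x := fun x => lt_of_lt_of_le hμmin (hμ x)
  -- nonnegativity of gradSq
  have hgrad : ∀ (f : V → ℝ) (x : V), 0 ≤ gradSq μ ω Adj f x := by
    intro f x
    have hμx : 0 < μ x := hμpos x
    refine mul_nonneg (by positivity) (tsum_nonneg fun y => ?_)
    exact mul_nonneg (le_of_lt (hG.2.2.1 x y.1 y.2)) (sq_nonneg _)
  set Φ : (V → ℝ) → V → ℝ :=
    fun f x => μ x * (gradSq μ ω Adj f x + (a x + 1) * f x ^ 2) with hΦdef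
  have hΦnn : ∀ (f : V → ℝ) (x : V), 0 ≤ Φ f x := by
    intro f x
    have h1 := hgrad f x
    have h2 := haε x
    have := (hμpos x).le
    have h3 : 0 ≤ (a x + 1) * f x ^ 2 := mul_nonneg (by linarith) (sq_nonneg _)
    exact mul_nonneg (hμpos x).le (by linarith)
  have hΦsum : ∀ f, memH μ ω Adj a f → Summable (Φ f) := by
    intro f hf
    exact (hf.1.add hf.2).congr (fun x => by simp only [hΦdef]; ring)
  have hC0 : (0:ℝ) ≤ C := le_trans (Real.sqrt_nonneg _) (hC 0)
  have hnormeq : ∀ f, normH μ ω Adj a f = Real.sqrt (∑' x, Φ f x) := fun f => rfl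
  have htsum_le : ∀ f, memH μ ω Adj a f → normH μ ω Adj a f ≤ C → ∑' x, Φ f x ≤ C ^ 2 := by
    intro f hf hfC
    have h1 : 0 ≤ ∑' x, Φ f x := tsum_nonneg (hΦnn f)
    have h2 := Real.sq_sqrt h1
    rw [hnormeq] at hfC
    nlinarith [Real.sqrt_nonneg (∑' x, Φ f x)]
  have hΦle : ∀ k, ∑' x, Φ (u k) x ≤ C ^ 2 := fun k => htsum_le (u k) (hu k) (hC k)
  -- pointwise uniform bound
  set B : ℝ := Real.sqrt (C ^ 2 / (μmin * ε₀)) with hBdef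
  have hB0 : 0 ≤ B := Real.sqrt_nonneg _
  have hB : ∀ k x, |u k x| ≤ B := by
    intro k x
    have h1 : μmin * ε₀ * u k x ^ 2 ≤ Φ (u k) x := by
      have hgr := hgrad (u k) x
      have hμx := hμ x
      have haa := haε x
      simp only [hΦdef]
      have hkey : μmin * ε₀ ≤ μ x * (a x + 1) :=
        mul_le_mul hμx haa hε₀.le (by linarith)
      nlinarith [sq_nonneg (u k x), mul_nonneg (hμpos x).le hgr]
    have h2 : Φ (u k) x ≤ ∑' y, Φ (u k) y :=
      Summable.le_tsum (hΦsum (u k) (hu k)) x (fun j _ => hΦnn (u k) j)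
    have h3 : u k x ^ 2 ≤ C ^ 2 / (μmin * ε₀) := by
      rw [le_div_iff₀ (by positivity)]
      nlinarith [hΦle k]
    calc |u k x| = Real.sqrt (u k x ^ 2) := (Real.sqrt_sq_eq_abs _).symm
      _ ≤ B := by rw [hBdef]; exact Real.sqrt_le_sqrt h3
  -- compactness / subsequence
  have hScompact : IsCompact (Set.univ.pi fun _ : V => Set.Icc (-B) B) :=
    isCompact_univ_pi fun _ => isCompact_Icc
  have hmemS : ∀ k, u k ∈ Set.univ.pi fun _ : V => Set.Icc (-B) B := by
    intro k
    rw [Set.mem_univ_pi]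
    exact fun x => Set.mem_Icc.mpr (abs_le.mp (hB k x))
  obtain ⟨w, hwS, φ, hφ, hconv⟩ := hScompact.isSeqCompact hmemS
  have hpt : ∀ x, Tendsto (fun k => u (φ k) x) atTop (𝓝 (w x)) := by
    rw [tendsto_pi_nhds] at hconv
    exact fun x => hconv x
  have hwB : ∀ x, |w x| ≤ B := by
    intro x
    exact abs_le.mpr (Set.mem_Icc.mp (hwS x (Set.mem_univ x)))
  refine ⟨φ, hφ, w, ?_⟩
  -- convergence of gradients
  have hgradconv : ∀ x, Tendsto (fun k => gradSq μ ω Adj (u (φ k)) x) atTop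
      (𝓝 (gradSq μ ω Adj w x)) := by
    intro x
    haveI : Fintype {y : V // Adj x y} := (hG.2.2.2.1 x).fintype
    have hrw : ∀ f : V → ℝ, gradSq μ ω Adj f x =
        (1/(2*μ x)) * ∑ y : {y : V // Adj x y}, ω x y.1 * (f y.1 - f x) ^ 2 := by
      intro f
      unfold gradSq nbrSum
      rw [tsum_fintype]
    simp only [hrw]
    apply Tendsto.const_mul
    apply tendsto_finset_sum
    intro y _
    exact (((hpt y.1).sub (hpt x)).pow 2).const_mul _
  have hΦconv : ∀ x, Tendsto (fun k => Φ (u (φ k)) x) atTop (𝓝 (Φ w x)) := by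
    intro x
    simp only [hΦdef]
    exact (((hgradconv x).add (((hpt x).pow 2).const_mul _))).const_mul _
  -- partial-sum bounds on w
  have hwsum_le : ∀ F : Finset V, ∑ x ∈ F, Φ w x ≤ C ^ 2 := by
    intro F
    have hlim : Tendsto (fun k => ∑ x ∈ F, Φ (u (φ k)) x) atTop (𝓝 (∑ x ∈ F, Φ w x)) :=
      tendsto_finset_sum F fun x _ => hΦconv x
    refine le_of_tendsto hlim (Eventually.of_forall fun k => ?_)
    exact le_trans (Summable.sum_le_tsum F (fun i _ => hΦnn _ i) (hΦsum _ (hu (φ k)))) (hΦle (φ k))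
  have hΦwsum : Summable (Φ w) := summable_of_sum_le (fun x => hΦnn w x) hwsum_le
  have hΦwle : ∑' x, Φ w x ≤ C ^ 2 := Summable.tsum_le_of_sum_le hΦwsum hwsum_le
  -- membership of w in H
  have hμw2 : Summable (fun x => μ x * w x ^ 2) := by
    refine Summable.of_nonneg_of_le (fun x => mul_nonneg (hμpos x).le (sq_nonneg _))
      (fun x => ?_) (hΦwsum.mul_left ε₀⁻¹)
    have h : ε₀ * (μ x * w x ^ 2) ≤ Φ w x := by
      simp only [hΦdef]
      have h1 : (μ x * w x ^ 2) * ε₀ ≤ (μ x * w x ^ 2) * (a x + 1) :=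
        mul_le_mul_of_nonneg_left (haε x) (mul_nonneg (hμpos x).le (sq_nonneg _))
      nlinarith [mul_nonneg (hμpos x).le (hgrad w x)]
    calc μ x * w x ^ 2 = ε₀⁻¹ * (ε₀ * (μ x * w x ^ 2)) := by field_simp
      _ ≤ ε₀⁻¹ * Φ w x := mul_le_mul_of_nonneg_left h (by positivity)
  have hμgw : Summable (fun x => μ x * gradSq μ ω Adj w x) := by
    refine Summable.of_nonneg_of_le
      (fun x => mul_nonneg (hμpos x).le (hgrad w x)) (fun x => ?_) hΦwsum
    have h2 : 0 ≤ μ x * ((a x + 1) * w x ^ 2) :=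
      mul_nonneg (hμpos x).le (mul_nonneg (by linarith [haε x]) (sq_nonneg _))
    simp only [hΦdef]
    nlinarith
  have hmemw : memH μ ω Adj a w := by
    constructor
    · exact (hμgw.add hμw2).congr (fun x => by ring)
    · refine ((hΦwsum.sub hμgw).sub hμw2).congr (fun x => ?_)
      simp only [hΦdef]; ring
  -- summability of h = μ/(a+1)
  have hh : Summable (fun x : V => μ x / (a x + 1)) := by
    rw [← summable_subtype_and_compl (s := {x : V | a x ≤ M₀})]
    constructor
    · refine Summable.of_nonneg_of_le
        (fun x => div_nonneg (hμpos x.1).le (by linarith [haε x.1]))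
        (fun x => ?_) (hDsum.mul_left ε₀⁻¹)
      rw [div_le_iff₀ (show (0:ℝ) < a x.1 + 1 by linarith [haε x.1])]
      have h2 : ε₀⁻¹ * μ x.1 * ε₀ ≤ ε₀⁻¹ * μ x.1 * (a x.1 + 1) :=
        mul_le_mul_of_nonneg_left (haε x.1) (mul_nonneg (inv_nonneg.mpr hε₀.le) (hμpos x.1).le)
      have h3 : ε₀⁻¹ * μ x.1 * ε₀ = μ x.1 := by field_simp
      linarith
    · have hright : Summable (fun x : {x : V // M₀ < a x} => μ x.1 / (a x.1 + 1)) := by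
        refine Summable.of_nonneg_of_le
          (fun x => div_nonneg (hμpos x.1).le (by linarith [haε x.1])) (fun x => ?_) hTsum
        have hax : 0 < a x.1 := lt_trans hM₀pos x.2
        exact div_le_div_of_nonneg_left (hμpos x.1).le hax (by linarith)
      exact (Equiv.summable_iff
        (Equiv.subtypeEquivRight (fun x => by
          simp [Set.mem_compl_iff, Set.mem_setOf_eq, not_le]))).mpr hright
  -- ψ bounds
  have hψsum : ∀ f, Summable (Φ f) → Summable (fun x => μ x * ((a x + 1) * f x ^ 2)) := by
    intro f hf
    refine Summable.of_nonneg_of_le (fun x => mul_nonneg (hμpos x).le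
      (mul_nonneg (by linarith [haε x]) (sq_nonneg _))) (fun x => ?_) hf
    simp only [hΦdef]
    nlinarith [mul_nonneg (hμpos x).le (hgrad f x)]
  have hψle : ∀ f, Summable (Φ f) → (∑' x, Φ f x ≤ C ^ 2) →
      ∑' x, μ x * ((a x + 1) * f x ^ 2) ≤ C ^ 2 := by
    intro f hf hfle
    refine le_trans (Summable.tsum_le_tsum (fun x => ?_) (hψsum f hf) hf) hfle
    simp only [hΦdef]
    nlinarith [mul_nonneg (hμpos x).le (hgrad f x)]
  -- energy bounds for differences
  have hEpt : ∀ k x, μ x * ((a x + 1) * (u (φ k) x - w x) ^ 2) ≤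
      2 * (μ x * ((a x + 1) * u (φ k) x ^ 2) + μ x * ((a x + 1) * w x ^ 2)) := by
    intro k x
    have h1 : (u (φ k) x - w x) ^ 2 ≤ 2 * u (φ k) x ^ 2 + 2 * w x ^ 2 := by
      nlinarith [sq_nonneg (u (φ k) x + w x)]
    have h2 : 0 ≤ μ x * (a x + 1) := mul_nonneg (hμpos x).le (by linarith [haε x])
    nlinarith
  have hEsum : ∀ k, Summable (fun x => μ x * ((a x + 1) * (u (φ k) x - w x) ^ 2)) := by
    intro k
    refine Summable.of_nonneg_of_le (fun x => mul_nonneg (hμpos x).le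
        (mul_nonneg (by linarith [haε x]) (sq_nonneg _))) (fun x => hEpt k x)
      (((hψsum _ (hΦsum _ (hu (φ k)))).add (hψsum _ hΦwsum)).mul_left 2)
  have hEle : ∀ k, ∑' x, μ x * ((a x + 1) * (u (φ k) x - w x) ^ 2) ≤ 4 * C ^ 2 := by
    intro k
    have hs1 := hψsum _ (hΦsum _ (hu (φ k)))
    have hs2 := hψsum _ hΦwsum
    have h1 := hψle _ (hΦsum _ (hu (φ k))) (hΦle (φ k))
    have h2 := hψle _ hΦwsum hΦwle
    have h3 : ∑' x, (2:ℝ) * (μ x * ((a x + 1) * u (φ k) x ^ 2) + μ x * ((a x + 1) * w x ^ 2))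
        = 2 * (∑' x, μ x * ((a x + 1) * u (φ k) x ^ 2) + ∑' x, μ x * ((a x + 1) * w x ^ 2)) := by
      rw [tsum_mul_left, Summable.tsum_add hs1 hs2]
    calc ∑' x, μ x * ((a x + 1) * (u (φ k) x - w x) ^ 2)
        ≤ ∑' x, (2:ℝ) * (μ x * ((a x + 1) * u (φ k) x ^ 2) + μ x * ((a x + 1) * w x ^ 2)) :=
          Summable.tsum_le_tsum (hEpt k) (hEsum k) ((hs1.add hs2).mul_left 2)
      _ = 2 * (∑' x, μ x * ((a x + 1) * u (φ k) x ^ 2) + ∑' x, μ x * ((a x + 1) * w x ^ 2)) := h3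
      _ ≤ 4 * C ^ 2 := by linarith
  -- summability of μ|d|
  have hfd : ∀ k, Summable (fun x => μ x * |u (φ k) x - w x|) := by
    intro k
    refine Summable.of_nonneg_of_le (fun x => mul_nonneg (hμpos x).le (abs_nonneg _))
      (fun x => ?_) (((hEsum k).mul_left (1/2)).add (hh.mul_left (1/2)))
    exact my_amgm (a x + 1) (u (φ k) x - w x) (μ x) (by linarith [haε x]) (hμpos x).le
  -- uniform tail estimate
  have htail : ∀ ε : ℝ, 0 < ε → ∃ F : Finset V, ∀ k,
      ∑' x : {x : V // x ∉ F}, μ x.1 * |u (φ k) x.1 - w x.1| ≤ ε := by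
    intro ε hε
    obtain ⟨t, htdef⟩ : ∃ t : ℝ, t = ε / (8 * (C ^ 2 + 1)) := ⟨_, rfl⟩
    have ht : 0 < t := by rw [htdef]; positivity
    have htend := tendsto_tsum_compl_atTop_zero (fun x : V => μ x / (a x + 1))
    obtain ⟨F, hF⟩ := (htend.eventually_lt_const (by positivity : (0:ℝ) < ε * t)).exists
    refine ⟨F, fun k => ?_⟩
    have hptw : ∀ x : V, μ x * |u (φ k) x - w x| ≤
        t/2 * (μ x * ((a x + 1) * (u (φ k) x - w x) ^ 2)) + 1/(2*t) * (μ x / (a x + 1)) := by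
      intro x
      have hax : 0 < a x + 1 := by linarith [haε x]
      have hs : 0 < t * (a x + 1) := mul_pos ht hax
      have h := my_amgm (t * (a x + 1)) (u (φ k) x - w x) (μ x) hs (hμpos x).le
      have e1 : 1/2 * (μ x * (t * (a x + 1) * (u (φ k) x - w x) ^ 2))
          = t/2 * (μ x * ((a x + 1) * (u (φ k) x - w x) ^ 2)) := by ring
      have e2 : 1/2 * (μ x / (t * (a x + 1))) = 1/(2*t) * (μ x / (a x + 1)) := by
        rw [mul_comm t (a x + 1), ← div_div]
        ring
      rw [e1, e2] at h
      exact h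
    have hsub1 : Summable (fun x : {x : V // x ∉ F} => μ x.1 * |u (φ k) x.1 - w x.1|) :=
      (hfd k).subtype _
    have hsubE : Summable (fun x : {x : V // x ∉ F} =>
        μ x.1 * ((a x.1 + 1) * (u (φ k) x.1 - w x.1) ^ 2)) := (hEsum k).subtype _
    have hsubh : Summable (fun x : {x : V // x ∉ F} => μ x.1 / (a x.1 + 1)) :=
      hh.subtype _
    have step1 : ∑' x : {x : V // x ∉ F}, μ x.1 * |u (φ k) x.1 - w x.1| ≤
        ∑' x : {x : V // x ∉ F}, (t/2 * (μ x.1 * ((a x.1 + 1) * (u (φ k) x.1 - w x.1) ^ 2))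
          + 1/(2*t) * (μ x.1 / (a x.1 + 1))) :=
      Summable.tsum_le_tsum (fun x => hptw x.1) hsub1 ((hsubE.mul_left (t/2)).add (hsubh.mul_left (1/(2*t))))
    have hsplit : ∑' x : {x : V // x ∉ F},
        (t/2 * (μ x.1 * ((a x.1 + 1) * (u (φ k) x.1 - w x.1) ^ 2))
          + 1/(2*t) * (μ x.1 / (a x.1 + 1)))
        = t/2 * (∑' x : {x : V // x ∉ F}, μ x.1 * ((a x.1 + 1) * (u (φ k) x.1 - w x.1) ^ 2))
          + 1/(2*t) * (∑' x : {x : V // x ∉ F}, μ x.1 / (a x.1 + 1)) := by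
      rw [Summable.tsum_add (hsubE.mul_left (t/2)) (hsubh.mul_left (1/(2*t))), tsum_mul_left, tsum_mul_left]
    have hEtail : ∑' x : {x : V // x ∉ F}, μ x.1 * ((a x.1 + 1) * (u (φ k) x.1 - w x.1) ^ 2)
        ≤ 4 * C ^ 2 := by
      refine le_trans (Summable.tsum_le_tsum_of_inj (Subtype.val) Subtype.val_injective
        (fun c _ => mul_nonneg (hμpos c).le (mul_nonneg (by linarith [haε c]) (sq_nonneg _)))
        (fun b => le_refl _) hsubE (hEsum k)) (hEle k)
    have hhtail : ∑' x : {x : V // x ∉ F}, μ x.1 / (a x.1 + 1) ≤ ε * t := hF.le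
    have hbound1 : t/2 * (∑' x : {x : V // x ∉ F},
        μ x.1 * ((a x.1 + 1) * (u (φ k) x.1 - w x.1) ^ 2)) ≤ ε / 2 := by
      have h1 : t/2 * (∑' x : {x : V // x ∉ F},
          μ x.1 * ((a x.1 + 1) * (u (φ k) x.1 - w x.1) ^ 2)) ≤ t/2 * (4 * C ^ 2) :=
        mul_le_mul_of_nonneg_left hEtail (by positivity)
      have h2 : t/2 * (4 * C ^ 2) ≤ ε / 2 := by
        have hte : t * (8 * (C ^ 2 + 1)) = ε := by
          rw [htdef]; field_simp
        have h9 : t * (2 * C ^ 2) ≤ t * (4 * (C ^ 2 + 1)) :=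
          mul_le_mul_of_nonneg_left (by nlinarith [sq_nonneg C]) ht.le
        nlinarith [h9, hte, ht.le]
      linarith
    have hbound2 : 1/(2*t) * (∑' x : {x : V // x ∉ F}, μ x.1 / (a x.1 + 1)) ≤ ε / 2 := by
      have h1 : 1/(2*t) * (∑' x : {x : V // x ∉ F}, μ x.1 / (a x.1 + 1))
          ≤ 1/(2*t) * (ε * t) := mul_le_mul_of_nonneg_left hhtail (by positivity)
      have h2 : 1/(2*t) * (ε * t) = ε / 2 := by field_simp
      linarith
    calc ∑' x : {x : V // x ∉ F}, μ x.1 * |u (φ k) x.1 - w x.1|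
        ≤ _ := step1
      _ = _ := hsplit
      _ ≤ ε / 2 + ε / 2 := add_le_add hbound1 hbound2
      _ = ε := by ring
  -- L¹ convergence
  have hL1 : Tendsto (fun k => ∑' x, μ x * |u (φ k) x - w x|) atTop (𝓝 0) := by
    refine my_tendsto_tsum_zero _ (fun k x => mul_nonneg (hμpos x).le (abs_nonneg _)) hfd
      (fun x => ?_) htail
    have h := ((hpt x).sub (tendsto_const_nhds : Tendsto (fun _ : ℕ => w x) atTop (𝓝 (w x)))).abs
    rw [sub_self, abs_zero] at h
    simpa using h.const_mul (μ x)
  refine ⟨hmemw, hpt, ?_, ?_⟩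
  · -- Lᵖ convergence
    intro p hp
    have hp0 : 0 < p := lt_of_lt_of_le one_pos hp
    have h2B : ∀ k x, |u (φ k) x - w x| ≤ 2 * B := by
      intro k x
      calc |u (φ k) x - w x| ≤ |u (φ k) x| + |w x| := abs_sub _ _
        _ ≤ B + B := add_le_add (hB (φ k) x) (hwB x)
        _ = 2 * B := by ring
    have hptle : ∀ k x, μ x * |u (φ k) x - w x| ^ p
        ≤ (2*B) ^ (p-1) * (μ x * |u (φ k) x - w x|) := by
      intro k x
      have hd0 : (0:ℝ) ≤ |u (φ k) x - w x| := abs_nonneg _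
      have e1 : |u (φ k) x - w x| ^ p = |u (φ k) x - w x| ^ (p-1) * |u (φ k) x - w x| := by
        have h := Real.rpow_add' (x := |u (φ k) x - w x|) (y := p-1) (z := 1) hd0
          (by intro hcon; apply absurd hp; linarith)
        rw [Real.rpow_one, show p - 1 + 1 = p by ring] at h
        exact h
      rw [e1]
      have h2 : |u (φ k) x - w x| ^ (p-1) ≤ (2*B) ^ (p-1) :=
        Real.rpow_le_rpow hd0 (h2B k x) (by linarith)
      calc μ x * (|u (φ k) x - w x| ^ (p-1) * |u (φ k) x - w x|)
          ≤ μ x * ((2*B) ^ (p-1) * |u (φ k) x - w x|) :=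
            mul_le_mul_of_nonneg_left (mul_le_mul_of_nonneg_right h2 hd0) (hμpos x).le
        _ = (2*B) ^ (p-1) * (μ x * |u (φ k) x - w x|) := by ring
    have hTp : Tendsto (fun k => ∑' x, μ x * |u (φ k) x - w x| ^ p) atTop (𝓝 0) := by
      refine squeeze_zero (fun k => tsum_nonneg fun x =>
          mul_nonneg (hμpos x).le (Real.rpow_nonneg (abs_nonneg _) p)) (fun k => ?_)
        (by simpa using hL1.const_mul ((2*B) ^ (p-1)))
      calc ∑' x, μ x * |u (φ k) x - w x| ^ p
          ≤ ∑' x, (2*B) ^ (p-1) * (μ x * |u (φ k) x - w x|) :=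
            Summable.tsum_le_tsum (hptle k) (Summable.of_nonneg_of_le (fun x =>
              mul_nonneg (hμpos x).le (Real.rpow_nonneg (abs_nonneg _) p)) (hptle k)
              ((hfd k).mul_left _)) ((hfd k).mul_left _)
        _ = (2*B) ^ (p-1) * ∑' x, μ x * |u (φ k) x - w x| := tsum_mul_left
    have hc : ContinuousAt (fun x : ℝ => x ^ (1/p)) 0 :=
      Real.continuousAt_rpow_const 0 (1/p) (Or.inr (by positivity))
    have hcomp := hc.tendsto.comp hTp
    simp only [Function.comp_def] at hcomp
    rwa [Real.zero_rpow (by positivity : (0:ℝ) < 1/p).ne'] at hcomp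
  · -- sup convergence
    refine squeeze_zero (fun k => Real.iSup_nonneg fun x => abs_nonneg _) (fun k => ?_)
      (by simpa using hL1.const_mul μmin⁻¹)
    refine Real.iSup_le (fun x => ?_) (mul_nonneg (by positivity)
      (tsum_nonneg fun y => mul_nonneg (hμpos y).le (abs_nonneg _)))
    have h1 : μmin * |u (φ k) x - w x| ≤ μ x * |u (φ k) x - w x| :=
      mul_le_mul_of_nonneg_right (hμ x) (abs_nonneg _)
    have h2 : μ x * |u (φ k) x - w x| ≤ ∑' y, μ y * |u (φ k) y - w y| :=
      Summable.le_tsum (hfd k) x (fun j _ => mul_nonneg (hμpos j).le (abs_nonneg _))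
    calc |u (φ k) x - w x| = μmin⁻¹ * (μmin * |u (φ k) x - w x|) := by field_simp
      _ ≤ μmin⁻¹ * ∑' y, μ y * |u (φ k) y - w y| :=
        mul_le_mul_of_nonneg_left (h1.trans h2) (by positivity)
end
end

section
/- Assume a:V→ℝ satisfies (A₁) and (A₂). For any u ∈ 𝒟∖{0} there exists a unique t_u > 0 such that t_u·u ∈ 𝒩. Furthermore J(t_u·u) > J(t·u) for all t ≥ 0 with t ≠ t_u. In particular, if u ∈ 𝒩 then t_u = 1. -/
open Filter Real Topology

noncomputable section

section AuxNehari

variable {V : Type*}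

lemma nbrSum_eq_aux (Adj : V → V → Prop) (f g : V → ℝ) (x : V)
    (h : ∀ y, f y = g y) : nbrSum Adj f x = nbrSum Adj g x := by
  unfold nbrSum
  exact tsum_congr fun y => h y.1

lemma nbrSum_mul_left_aux (Adj : V → V → Prop) (c : ℝ) (f : V → ℝ) (x : V) :
    nbrSum Adj (fun y => c * f y) x = c * nbrSum Adj f x := by
  unfold nbrSum
  exact tsum_mul_left

lemma gradSq_smul_aux (μ : V → ℝ) (ω : V → V → ℝ) (Adj : V → V → Prop)
    (t : ℝ) (u : V → ℝ) (x : V) :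
    gradSq μ ω Adj (fun y => t * u y) x = t ^ 2 * gradSq μ ω Adj u x := by
  unfold gradSq
  rw [nbrSum_eq_aux Adj _ (fun y => t ^ 2 * (ω x y * (u y - u x) ^ 2)) x (fun y => by ring),
    nbrSum_mul_left_aux]
  ring

lemma gammaG_self_aux (μ : V → ℝ) (ω : V → V → ℝ) (Adj : V → V → Prop)
    (u : V → ℝ) (x : V) :
    gammaG μ ω Adj u u x = gradSq μ ω Adj u x := by
  unfold gammaG gradSq
  rw [nbrSum_eq_aux Adj _ (fun y => ω x y * (u y - u x) ^ 2) x (fun y => by ring)]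

lemma gammaG_smul_self_aux (μ : V → ℝ) (ω : V → V → ℝ) (Adj : V → V → Prop)
    (t : ℝ) (u : V → ℝ) (x : V) :
    gammaG μ ω Adj (fun y => t * u y) (fun y => t * u y) x = t ^ 2 * gradSq μ ω Adj u x := by
  rw [gammaG_self_aux, gradSq_smul_aux]

lemma gradSq_nonneg_aux (μ : V → ℝ) (ω : V → V → ℝ) (Adj : V → V → Prop)
    (hω : ∀ x y, Adj x y → 0 ≤ ω x y) (hμ : ∀ x, 0 ≤ μ x) (u : V → ℝ) (x : V) :
    0 ≤ gradSq μ ω Adj u x := by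
  unfold gradSq nbrSum
  refine mul_nonneg (div_nonneg one_pos.le (by linarith [hμ x])) ?_
  exact tsum_nonneg fun y => mul_nonneg (hω x y.1 y.2) (sq_nonneg _)

end AuxNehari

/-- for every `u ∈ 𝒟 \ {0}` there is a unique `t_u > 0` with
`t_u u ∈ 𝒩`; moreover `J(t_u u) > J(t u)` for all `t ≥ 0`, `t ≠ t_u`, and
`t_u = 1` whenever `u ∈ 𝒩`. -/
theorem nehari_projection_unique
    {V : Type*} [Countable V] (Adj : V → V → Prop) (ω : V → V → ℝ) (μ a : V → ℝ)
    (hG : GoodGraph Adj ω)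
    (hμ : ∃ μmin : ℝ, 0 < μmin ∧ ∀ x, μmin ≤ μ x)
    (hA1 : ∃ a₀ : ℝ, -1 < a₀ ∧ a₀ < 0 ∧ ∀ x, a₀ ≤ a x)
    (hA2 : ∀ M : ℝ, 0 < M → Summable (fun x : {x : V // a x ≤ M} => μ x.1))
    (u : V → ℝ) (hu : memD μ ω Adj a u) (hu0 : u ≠ 0) :
    ∃ tu : ℝ, 0 < tu ∧ Nehari μ ω Adj a (fun x => tu * u x) ∧
      (∀ t : ℝ, 0 < t → Nehari μ ω Adj a (fun x => t * u x) → t = tu) ∧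
      (∀ t : ℝ, 0 ≤ t → t ≠ tu →
        JFun μ ω Adj a (fun x => t * u x) < JFun μ ω Adj a (fun x => tu * u x)) ∧
      (Nehari μ ω Adj a u → tu = 1) := by
  obtain ⟨μmin, hμmin, hμle⟩ := hμ
  have hμ0 : ∀ x, 0 < μ x := fun x => lt_of_lt_of_le hμmin (hμle x)
  have hω0 : ∀ x y, Adj x y → 0 ≤ ω x y := fun x y h => (hG.2.2.1 x y h).le
  have hgrad0 : ∀ (w : V → ℝ) (x : V), 0 ≤ gradSq μ ω Adj w x :=
    fun w x => gradSq_nonneg_aux μ ω Adj hω0 (fun x => (hμ0 x).le) w x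
  set A := ∑' x, μ x * (gradSq μ ω Adj u x + (a x + 1) * u x ^ 2) with hA_def
  set B := ∑' x, μ x * (u x ^ 2 * Real.log (u x ^ 2)) with hB_def
  set C := ∑' x, μ x * u x ^ 2 with hC_def
  have hSA : Summable (fun x => μ x * (gradSq μ ω Adj u x + (a x + 1) * u x ^ 2)) :=
    (hu.1.1.add hu.1.2).congr (fun x => by ring)
  have hSC : Summable (fun x => μ x * u x ^ 2) := by
    refine hu.1.1.of_nonneg_of_le (fun x => mul_nonneg (hμ0 x).le (sq_nonneg _)) (fun x => ?_)
    have h1 := hgrad0 u x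
    nlinarith [hμ0 x, sq_nonneg (u x)]
  have hSB : Summable (fun x => μ x * (u x ^ 2 * Real.log (u x ^ 2))) := by
    apply Summable.of_abs
    refine hu.2.congr (fun x => ?_)
    rw [abs_mul, abs_mul, abs_of_nonneg (hμ0 x).le, abs_of_nonneg (sq_nonneg (u x))]
  have hxu : ∃ x, u x ≠ 0 := by
    by_contra h
    push_neg at h
    exact hu0 (funext fun x => h x)
  obtain ⟨x₀, hx₀⟩ := hxu
  have hCpos : 0 < C := by
    rw [hC_def]
    exact Summable.tsum_pos hSC (fun x => mul_nonneg (hμ0 x).le (sq_nonneg _)) x₀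
      (mul_pos (hμ0 x₀) (by positivity))
  -- the scaled sums
  have hs1 : ∀ t : ℝ,
      (∑' x, μ x * (gradSq μ ω Adj (fun y => t * u y) x + (a x + 1) * (t * u x) ^ 2))
        = t ^ 2 * A := by
    intro t
    rw [hA_def, ← tsum_mul_left]
    exact tsum_congr fun x => by rw [gradSq_smul_aux]; ring
  have hs2 : ∀ t : ℝ, t ≠ 0 →
      (∑' x, μ x * ((t * u x) ^ 2 * Real.log ((t * u x) ^ 2)))
        = t ^ 2 * B + (t ^ 2 * Real.log (t ^ 2)) * C := by
    intro t ht
    have hpt : ∀ x, μ x * ((t * u x) ^ 2 * Real.log ((t * u x) ^ 2)) =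
        t ^ 2 * (μ x * (u x ^ 2 * Real.log (u x ^ 2)))
          + (t ^ 2 * Real.log (t ^ 2)) * (μ x * u x ^ 2) := by
      intro x
      by_cases hx : u x = 0
      · simp [hx]
      · rw [show (t * u x) ^ 2 = t ^ 2 * u x ^ 2 by ring,
          Real.log_mul (pow_ne_zero 2 ht) (pow_ne_zero 2 hx)]
        ring
    rw [tsum_congr hpt, Summable.tsum_add (hSB.mul_left _) (hSC.mul_left _), tsum_mul_left,
      tsum_mul_left, ← hB_def, ← hC_def]
  have hs3 : ∀ t : ℝ,
      (∑' x, μ x * (gammaG μ ω Adj (fun y => t * u y) (fun y => t * u y) x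
        + a x * (t * u x) * (t * u x))) = t ^ 2 * (A - C) := by
    intro t
    have hAC : A - C = ∑' x, (μ x * (gradSq μ ω Adj u x + (a x + 1) * u x ^ 2)
        - μ x * u x ^ 2) := by
      rw [Summable.tsum_sub hSA hSC, ← hA_def, ← hC_def]
    rw [hAC, ← tsum_mul_left]
    exact tsum_congr fun x => by rw [gammaG_smul_self_aux]; ring
  have hs4 : ∀ t : ℝ, t ≠ 0 →
      (∑' x, μ x * ((t * u x) * (t * u x) * Real.log ((t * u x) ^ 2)))
        = t ^ 2 * B + (t ^ 2 * Real.log (t ^ 2)) * C := by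
    intro t ht
    rw [← hs2 t ht]
    exact tsum_congr fun x => by ring
  have hJD : ∀ t : ℝ, t ≠ 0 → JDer μ ω Adj a (fun x => t * u x) (fun x => t * u x)
      = t ^ 2 * ((A - C - B) - Real.log (t ^ 2) * C) := by
    intro t ht
    simp only [JDer]
    rw [hs3 t, hs4 t ht]
    ring
  have hJF : ∀ t : ℝ, t ≠ 0 → JFun μ ω Adj a (fun x => t * u x)
      = (1 / 2) * (t ^ 2 * A) - (1 / 2) * (t ^ 2 * B + (t ^ 2 * Real.log (t ^ 2)) * C) := by
    intro t ht
    simp only [JFun]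
    rw [hs1 t, hs2 t ht]
  have hmemD : ∀ t : ℝ, t ≠ 0 → memD μ ω Adj a (fun x => t * u x) := by
    intro t ht
    refine ⟨⟨?_, ?_⟩, ?_⟩
    · exact (hu.1.1.mul_left (t ^ 2)).congr fun x => by rw [gradSq_smul_aux]; ring
    · exact (hu.1.2.mul_left (t ^ 2)).congr fun x => by ring
    · refine Summable.of_nonneg_of_le
        (fun x => mul_nonneg (hμ0 x).le (mul_nonneg (sq_nonneg _) (abs_nonneg _)))
        (fun x => ?_)
        ((hu.2.mul_left (t ^ 2)).add (hSC.mul_left (t ^ 2 * |Real.log (t ^ 2)|)))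
      by_cases hx : u x = 0
      · simp [hx]
      · have hlog : |Real.log ((t * u x) ^ 2)| ≤ |Real.log (t ^ 2)| + |Real.log (u x ^ 2)| := by
          rw [show (t * u x) ^ 2 = t ^ 2 * u x ^ 2 by ring,
            Real.log_mul (pow_ne_zero 2 ht) (pow_ne_zero 2 hx)]
          exact abs_add_le _ _
        calc μ x * ((t * u x) ^ 2 * |Real.log ((t * u x) ^ 2)|)
            = (μ x * (t ^ 2 * u x ^ 2)) * |Real.log ((t * u x) ^ 2)| := by ring
          _ ≤ (μ x * (t ^ 2 * u x ^ 2)) * (|Real.log (t ^ 2)| + |Real.log (u x ^ 2)|) := by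
              refine mul_le_mul_of_nonneg_left hlog ?_
              exact mul_nonneg (hμ0 x).le (by positivity)
          _ = t ^ 2 * (μ x * (u x ^ 2 * |Real.log (u x ^ 2)|))
              + (t ^ 2 * |Real.log (t ^ 2)|) * (μ x * u x ^ 2) := by ring
  have hne : ∀ t : ℝ, t ≠ 0 → (fun x => t * u x) ≠ 0 := by
    intro t ht h
    apply hx₀
    have h2 := congrFun h x₀
    rcases mul_eq_zero.mp h2 with h3 | h3
    · exact absurd h3 ht
    · exact h3
  set tu := Real.exp ((A - C - B) / (2 * C)) with htu_def
  have htu : 0 < tu := Real.exp_pos _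
  have hlogtu : Real.log (tu ^ 2) = (A - C - B) / C := by
    rw [Real.log_pow, htu_def, Real.log_exp]
    push_cast
    field_simp
  have hClog : Real.log (tu ^ 2) * C = A - C - B := by
    rw [hlogtu]
    field_simp
  have hJDtu : JDer μ ω Adj a (fun x => tu * u x) (fun x => tu * u x) = 0 := by
    rw [hJD tu htu.ne', hClog]
    ring
  have hJtu : JFun μ ω Adj a (fun x => tu * u x) = tu ^ 2 / 2 * C := by
    rw [hJF tu htu.ne']
    linear_combination (-(tu ^ 2 / 2)) * hClog
  refine ⟨tu, htu, ⟨hmemD tu htu.ne', hne tu htu.ne', hJDtu⟩, ?_, ?_, ?_⟩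
  · -- uniqueness
    intro t ht hN
    have h0 := hN.2.2
    rw [hJD t ht.ne'] at h0
    have ht2 : (t : ℝ) ^ 2 ≠ 0 := pow_ne_zero _ ht.ne'
    have h1 : Real.log (t ^ 2) * C = A - C - B := by
      rcases mul_eq_zero.mp h0 with h | h
      · exact absurd h ht2
      · linarith
    have hlt : Real.log t = (A - C - B) / (2 * C) := by
      rw [Real.log_pow] at h1
      push_cast at h1
      field_simp
      linarith
    calc t = Real.exp (Real.log t) := (Real.exp_log ht).symm
      _ = tu := by rw [hlt]
  · -- J comparison
    intro t ht0 htne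
    by_cases h : t = 0
    · subst h
      have h0J : JFun μ ω Adj a (fun x => (0 : ℝ) * u x) = 0 := by
        have e1 : ∀ x : V, μ x * (gradSq μ ω Adj (fun y => (0 : ℝ) * u y) x
            + (a x + 1) * ((0 : ℝ) * u x) ^ 2) = 0 := fun x => by
          rw [gradSq_smul_aux]; ring
        have e2 : ∀ x : V, μ x * (((0 : ℝ) * u x) ^ 2
            * Real.log (((0 : ℝ) * u x) ^ 2)) = 0 := fun x => by norm_num
        simp only [JFun]
        rw [tsum_congr e1, tsum_congr e2, tsum_zero]
        ring
      rw [h0J, hJtu]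
      exact mul_pos (by positivity) hCpos
    · have htpos : 0 < t := ht0.lt_of_ne (Ne.symm h)
      set y := tu ^ 2 / t ^ 2 with hy_def
      have hy0 : 0 < y := by positivity
      have hyt : y * t ^ 2 = tu ^ 2 := by
        rw [hy_def]
        field_simp
      have hy1 : y ≠ 1 := by
        intro hy
        apply htne
        have h2 : t ^ 2 = tu ^ 2 := by
          rw [hy] at hyt
          linarith
        have h3 : (t - tu) * (t + tu) = 0 := by linear_combination h2
        rcases mul_eq_zero.mp h3 with h4 | h4
        · linarith
        · linarith
      have hlogy : Real.log y = Real.log (tu ^ 2) - Real.log (t ^ 2) :=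
        Real.log_div (by positivity) (by positivity)
      have hkey : Real.log y < y - 1 := Real.log_lt_sub_one_of_pos hy0 hy1
      have hlt2 : Real.log (t ^ 2) = Real.log (tu ^ 2) - Real.log y := by
        rw [hlogy]; ring
      rw [hJF t h, hJtu, hlt2]
      have hP : (t ^ 2 * C) * Real.log y < (t ^ 2 * C) * (y - 1) :=
        mul_lt_mul_of_pos_left hkey (mul_pos (pow_pos htpos 2) hCpos)
      have hClog2 : t ^ 2 * (Real.log (tu ^ 2) * C) = t ^ 2 * (A - C - B) := by
        rw [hClog]
      have hyt2 : y * t ^ 2 * C = tu ^ 2 * C := by rw [hyt]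
      nlinarith [hP, hClog2, hyt2]
  · -- Nehari u → tu = 1
    intro hNu
    have huu : (fun x => (1 : ℝ) * u x) = u := funext fun x => one_mul _
    have h1 := hJD 1 one_ne_zero
    rw [huu] at h1
    rw [hNu.2.2] at h1
    have h2 : A - C - B = 0 := by
      have : Real.log ((1 : ℝ) ^ 2) = 0 := by norm_num
      rw [this] at h1
      nlinarith [h1]
    rw [htu_def, h2]
    simp
end
end

section
/- Assume μ(x) ≥ μ_min > 0 for all x∈V and a:V→ℝ satisfies (A₁) and (A₂′). Then for every u ∈ ℋ one has ∫_V u²|log u²| dμ < ∞; consequently the energy functional J(u) = ½‖u‖_ℋ² − ½∫_V u² log u² dμ is well-defined (finite) at every u ∈ ℋ. -/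
open Filter Real Topology

noncomputable section

/-- Key pointwise inequality: `t|log t| ≤ t² + 2√t` with `t = u²`. -/
lemma sq_mul_abs_log_le_aux (u : ℝ) :
    u ^ 2 * |Real.log (u ^ 2)| ≤ (u ^ 2) ^ 2 + 2 * |u| := by
  rcases eq_or_ne u 0 with h | h
  · simp [h]
  have ht : (0 : ℝ) < u ^ 2 := by positivity
  have hu : 0 < |u| := abs_pos.mpr h
  have hlogsq : Real.log (u ^ 2) = 2 * Real.log |u| := by
    rw [← sq_abs u, Real.log_pow]
    push_cast; ring
  rcases le_or_gt 1 (u ^ 2) with h1 | h1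
  · have hlog : |Real.log (u ^ 2)| = Real.log (u ^ 2) :=
      abs_of_nonneg (Real.log_nonneg h1)
    have hle : Real.log (u ^ 2) ≤ u ^ 2 :=
      (Real.log_le_sub_one_of_pos ht).trans (by linarith)
    nlinarith [abs_nonneg u, sq_nonneg u]
  · have hlog : |Real.log (u ^ 2)| = -Real.log (u ^ 2) :=
      abs_of_nonpos (Real.log_nonpos (le_of_lt ht) h1.le)
    have hinv : Real.log (|u|⁻¹) ≤ |u|⁻¹ - 1 :=
      Real.log_le_sub_one_of_pos (by positivity)
    have hneg : -Real.log |u| ≤ |u|⁻¹ := by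
      rw [← Real.log_inv]; linarith
    have husq : |u| * |u| = u ^ 2 := by rw [← sq_abs u]; ring
    have hmul : |u| * |u|⁻¹ = 1 := mul_inv_cancel₀ (ne_of_gt hu)
    have h2 : u ^ 2 * |u|⁻¹ = |u| := by rw [← husq, mul_assoc, hmul, mul_one]
    rw [hlog, hlogsq]
    nlinarith [mul_le_mul_of_nonneg_left hneg (sq_nonneg u), h2,
      sq_nonneg (u ^ 2), abs_nonneg u]

/-- under `(A₁)` and `(A₂′)`, for every `u ∈ ℋ` one has
`∫_V u²|log u²| dμ < ∞`, so the functional `J` is well-defined on `ℋ`. -/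
theorem log_term_integrable_on_H
    {V : Type*} [Countable V] (Adj : V → V → Prop) (ω : V → V → ℝ) (μ a : V → ℝ)
    (μmin : ℝ) (hμmin : 0 < μmin) (hμ : ∀ x, μmin ≤ μ x)
    (hG : GoodGraph Adj ω)
    (hA1 : ∃ a₀ : ℝ, -1 < a₀ ∧ a₀ < 0 ∧ ∀ x, a₀ ≤ a x)
    (hA2' : ∃ M₀ : ℝ, 0 < M₀ ∧ Summable (fun x : {x : V // a x ≤ M₀} => μ x.1) ∧
      Summable (fun x : {x : V // M₀ < a x} => μ x.1 / a x.1)) :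
    ∀ u : V → ℝ, memH μ ω Adj a u →
      Summable (fun x => μ x * (u x ^ 2 * |Real.log (u x ^ 2)|)) := by
  obtain ⟨M₀, hM₀, hsD, hsDc⟩ := hA2'
  intro u hu
  obtain ⟨hs1, hs2⟩ := hu
  have hμpos : ∀ x, 0 < μ x := fun x => lt_of_lt_of_le hμmin (hμ x)
  -- gradSq is nonnegative
  have hgrad : ∀ x, 0 ≤ gradSq μ ω Adj u x := by
    intro x
    have hx := hμpos x
    apply mul_nonneg
    · positivity
    · unfold nbrSum
      apply tsum_nonneg
      intro y
      have := hG.2.2.1 x y.1 y.2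
      positivity
  -- μ u² summable
  have hsu2 : Summable (fun x => μ x * u x ^ 2) := by
    apply Summable.of_nonneg_of_le (fun x => by have := hμpos x; positivity) _ hs1
    intro x
    have := hgrad x
    have := (hμpos x).le
    nlinarith
  set C : ℝ := ∑' x, μ x * u x ^ 2 with hCdef
  have hub : ∀ x, u x ^ 2 ≤ C / μmin := by
    intro x
    have h1 : μ x * u x ^ 2 ≤ C :=
      Summable.le_tsum hsu2 x (fun y _ => by have := hμpos y; positivity)
    have h2 : μmin * u x ^ 2 ≤ μ x * u x ^ 2 :=
      mul_le_mul_of_nonneg_right (hμ x) (sq_nonneg _)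
    rw [le_div_iff₀ hμmin]
    linarith [mul_comm (u x ^ 2) μmin]
  -- summability of μ |u|
  have hsabs : Summable (fun x => μ x * |u x|) := by
    rw [← summable_subtype_and_compl (s := {x : V | a x ≤ M₀})]
    constructor
    · -- on D : |u| ≤ (1 + u²)/2
      have hb : Summable (fun x : {x : V // a x ≤ M₀} =>
          (μ x.1 + μ x.1 * u x.1 ^ 2) / 2) :=
        (hsD.add (hsu2.subtype {x : V | a x ≤ M₀})).div_const 2
      apply Summable.of_nonneg_of_le _ _ hb
      · intro x; have := hμpos x.1; positivity
      · intro x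
        have h1 : |u x.1| ≤ (1 + u x.1 ^ 2) / 2 := by
          nlinarith [sq_nonneg (|u x.1| - 1), sq_abs (u x.1)]
        have := (hμpos x.1).le
        nlinarith
    · -- on complement : a > M₀ > 0, |u| ≤ (1/a + a u²)/2
      have hsau2 : Summable (fun x : {x : V // M₀ < a x} =>
          μ x.1 * (a x.1 * u x.1 ^ 2)) := hs2.subtype {x : V | M₀ < a x}
      have hb : Summable (fun x : {x : V // M₀ < a x} =>
          (μ x.1 / a x.1 + μ x.1 * (a x.1 * u x.1 ^ 2)) / 2) :=
        (hsDc.add hsau2).div_const 2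
      have hbc : Summable (fun x : {x : V // M₀ < a x} => μ x.1 * |u x.1|) := by
        apply Summable.of_nonneg_of_le _ _ hb
        · intro x; have := hμpos x.1; positivity
        · intro x
          have ha : 0 < a x.1 := lt_trans hM₀ x.2
          have hμx := (hμpos x.1).le
          have key : 2 * (a x.1) * |u x.1| ≤ 1 + a x.1 ^ 2 * u x.1 ^ 2 := by
            nlinarith [sq_nonneg (a x.1 * |u x.1| - 1), sq_abs (u x.1)]
          rw [le_div_iff₀ (by norm_num : (0:ℝ) < 2), div_add' _ _ _ (ne_of_gt ha),
            le_div_iff₀ ha] at *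
          nlinarith [sq_abs (u x.1)]
      exact (Equiv.summable_iff
        (f := fun x : ({x : V | a x ≤ M₀}ᶜ : Set V) => μ x.1 * |u x.1|)
        (Equiv.subtypeEquivRight (fun x : V =>
          (not_le (a := a x) (b := M₀)).symm))).mp hbc
  -- final comparison
  have hb : Summable (fun x => (C / μmin) * (μ x * u x ^ 2) + 2 * (μ x * |u x|)) :=
    ((hsu2.mul_left _).add (hsabs.mul_left 2))
  apply Summable.of_nonneg_of_le _ _ hb
  · intro x; have := hμpos x; positivity
  · intro x
    have h1 := sq_mul_abs_log_le_aux (u x)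
    have hμx := (hμpos x).le
    have h2 : μ x * (u x ^ 2 * |Real.log (u x ^ 2)|) ≤
        μ x * ((u x ^ 2) ^ 2 + 2 * |u x|) :=
      mul_le_mul_of_nonneg_left h1 hμx
    have h3 : μ x * (u x ^ 2) ^ 2 ≤ (C / μmin) * (μ x * u x ^ 2) := by
      have := hub x
      nlinarith [sq_nonneg (u x), mul_nonneg hμx (sq_nonneg (u x))]
    nlinarith [abs_nonneg (u x)]
end
end

section
/- Assume μ(x) ≥ μ_min > 0 for all x∈V and a:V→ℝ satisfies (A₁) and (A₂′). Then there exist positive constants ρ and δ such that J(u) ≥ δ for all u ∈ ℋ with ‖u‖_ℋ = ρ. -/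
open Filter Real Topology

noncomputable section

/-- mountain pass geometry, part (i): there exist `ρ, δ > 0` such
that `J(u) ≥ δ` whenever `‖u‖_ℋ = ρ`. -/
theorem mountain_pass_geometry_i
    {V : Type*} [Countable V] (Adj : V → V → Prop) (ω : V → V → ℝ) (μ a : V → ℝ)
    (μmin : ℝ) (hμmin : 0 < μmin) (hμ : ∀ x, μmin ≤ μ x)
    (hG : GoodGraph Adj ω)
    (hA1 : ∃ a₀ : ℝ, -1 < a₀ ∧ a₀ < 0 ∧ ∀ x, a₀ ≤ a x)
    (hA2' : ∃ M₀ : ℝ, 0 < M₀ ∧ Summable (fun x : {x : V // a x ≤ M₀} => μ x.1) ∧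
      Summable (fun x : {x : V // M₀ < a x} => μ x.1 / a x.1)) :
    ∃ ρ δ : ℝ, 0 < ρ ∧ 0 < δ ∧
      ∀ u : V → ℝ, memH μ ω Adj a u → normH μ ω Adj a u = ρ →
        δ ≤ JFun μ ω Adj a u := by
  obtain ⟨a₀, ha₀, ha₀', hA⟩ := hA1
  set c := a₀ + 1 with hcdef
  have hc : 0 < c := by simp only [hcdef]; linarith
  set ρ2 := c ^ 2 * μmin / 2 with hρ2def
  have hρ2pos : 0 < ρ2 := by positivity
  refine ⟨Real.sqrt ρ2, ρ2 / 4, Real.sqrt_pos.mpr hρ2pos, by positivity, ?_⟩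
  intro u hu hnorm
  have hμpos : ∀ x, 0 < μ x := fun x => lt_of_lt_of_le hμmin (hμ x)
  have hgrad : ∀ x, 0 ≤ gradSq μ ω Adj u x := by
    intro x
    have hμx : 0 < μ x := hμpos x
    apply mul_nonneg (by positivity)
    apply tsum_nonneg
    intro y
    have h := hG.2.2.1 x y.1 y.2
    positivity
  obtain ⟨hu1, hu2⟩ := hu
  have hsum2 : Summable (fun x => μ x * u x ^ 2) := by
    apply Summable.of_nonneg_of_le (fun x => by have := (hμpos x).le; positivity)
      (fun x => ?_) hu1
    have h1 := hgrad x
    have h2 := (hμpos x).le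
    nlinarith
  have hsumN : Summable (fun x => μ x * (gradSq μ ω Adj u x + (a x + 1) * u x ^ 2)) := by
    have heq : (fun x => μ x * (gradSq μ ω Adj u x + (a x + 1) * u x ^ 2))
        = fun x => μ x * (gradSq μ ω Adj u x + u x ^ 2) + μ x * (a x * u x ^ 2) := by
      funext x; ring
    rw [heq]; exact hu1.add hu2
  have hNterm : ∀ x, 0 ≤ μ x * (gradSq μ ω Adj u x + (a x + 1) * u x ^ 2) := by
    intro x
    have h1 := hgrad x
    have h2 : (0:ℝ) ≤ a x + 1 := by have := hA x; linarith
    have h3 := (hμpos x).le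
    positivity
  set N := ∑' x, μ x * (gradSq μ ω Adj u x + (a x + 1) * u x ^ 2) with hNdef
  have hNnonneg : 0 ≤ N := tsum_nonneg hNterm
  have hNρ : N = ρ2 := by
    have h1 : Real.sqrt N = Real.sqrt ρ2 := hnorm
    have h2 : Real.sqrt N ^ 2 = N := Real.sq_sqrt hNnonneg
    have h3 : Real.sqrt ρ2 ^ 2 = ρ2 := Real.sq_sqrt hρ2pos.le
    rw [← h2, h1, h3]
  have hle2 : ∑' x, μ x * u x ^ 2 ≤ ρ2 / c := by
    have key : c * ∑' x, μ x * u x ^ 2 ≤ N := by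
      rw [← tsum_mul_left]
      apply Summable.tsum_le_tsum _ (hsum2.mul_left c) hsumN
      intro x
      have h2 : c ≤ a x + 1 := by have := hA x; simp only [hcdef]; linarith
      have h1 := hgrad x
      have h3 := (hμpos x).le
      have h4 : μ x * (c * u x ^ 2) ≤ μ x * ((a x + 1) * u x ^ 2) :=
        mul_le_mul_of_nonneg_left (mul_le_mul_of_nonneg_right h2 (sq_nonneg _)) h3
      nlinarith [mul_nonneg h3 h1]
    rw [le_div_iff₀ hc, mul_comm]
    rw [← hNρ]
    exact key
  have hsup : ∀ x, u x ^ 2 ≤ ρ2 / (c * μmin) := by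
    intro x
    have hx : μmin * u x ^ 2 ≤ μ x * u x ^ 2 :=
      mul_le_mul_of_nonneg_right (hμ x) (sq_nonneg _)
    have hx2 : μ x * u x ^ 2 ≤ ∑' x, μ x * u x ^ 2 :=
      Summable.le_tsum hsum2 x (fun y _ => by have := (hμpos y).le; positivity)
    have : μmin * u x ^ 2 ≤ ρ2 / c := le_trans (le_trans hx hx2) hle2
    rw [le_div_iff₀ (by positivity)]
    calc u x ^ 2 * (c * μmin) = c * (μmin * u x ^ 2) := by ring
    _ ≤ c * (ρ2 / c) := by apply mul_le_mul_of_nonneg_left this hc.le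
    _ = ρ2 := by field_simp
  set M := ρ2 / (c * μmin) with hMdef
  have hMpos : 0 < M := by positivity
  have hpt4 : ∀ x, μ x * u x ^ 4 ≤ M * (μ x * u x ^ 2) := by
    intro x
    calc μ x * u x ^ 4 = (μ x * u x ^ 2) * u x ^ 2 := by ring
    _ ≤ (μ x * u x ^ 2) * M := by
        apply mul_le_mul_of_nonneg_left (hsup x)
        have := (hμpos x).le; positivity
    _ = M * (μ x * u x ^ 2) := by ring
  have hsum4 : Summable (fun x => μ x * u x ^ 4) := by
    apply Summable.of_nonneg_of_le (fun x => by have := (hμpos x).le; positivity)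
      hpt4 (hsum2.mul_left M)
  have hptS : ∀ x, μ x * (u x ^ 2 * Real.log (u x ^ 2)) ≤ μ x * u x ^ 4 := by
    intro x
    have hμx := (hμpos x).le
    have hkey : u x ^ 2 * Real.log (u x ^ 2) ≤ u x ^ 4 := by
      by_cases h : u x = 0
      · simp [h]
      · have hpos : 0 < u x ^ 2 := by positivity
        have hlog := Real.log_le_sub_one_of_pos hpos
        nlinarith
    exact mul_le_mul_of_nonneg_left hkey hμx
  have h4 : ∑' x, μ x * u x ^ 4 ≤ ρ2 / 2 := by
    have step1 : ∑' x, μ x * u x ^ 4 ≤ M * ∑' x, μ x * u x ^ 2 := by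
      rw [← tsum_mul_left]
      exact Summable.tsum_le_tsum hpt4 hsum4 (hsum2.mul_left M)
    have step2 : M * ∑' x, μ x * u x ^ 2 ≤ M * (ρ2 / c) :=
      mul_le_mul_of_nonneg_left hle2 hMpos.le
    have step3 : M * (ρ2 / c) = ρ2 / 2 := by
      rw [hMdef, hρ2def]
      field_simp
    linarith
  have hS : ∑' x, μ x * (u x ^ 2 * Real.log (u x ^ 2)) ≤ ρ2 / 2 := by
    by_cases hs : Summable (fun x => μ x * (u x ^ 2 * Real.log (u x ^ 2)))
    · exact le_trans (Summable.tsum_le_tsum hptS hs hsum4) h4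
    · rw [tsum_eq_zero_of_not_summable hs]; positivity
  have hJ : JFun μ ω Adj a u
      = (1 / 2) * N - (1 / 2) * ∑' x, μ x * (u x ^ 2 * Real.log (u x ^ 2)) := rfl
  rw [hJ, hNρ]
  linarith
end
end

section
/- Assume μ(x) ≥ μ_min > 0 for all x∈V and a:V→ℝ satisfies (A₁) and (A₂′). Then ℋ embeds continuously into L¹(V): there exists a constant C > 0 such that ∑_{x∈V} μ(x)|u(x)| ≤ C·‖u‖_ℋ for every u ∈ ℋ. -/
open Filter Real Topology

noncomputable section

/-- AM-GM optimization helper. -/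
lemma amgm_aux {L W Q : ℝ} (hW : 0 ≤ W) (hQ : 0 ≤ Q)
    (h : ∀ t : ℝ, 0 < t → L ≤ (t * W + Q / t) / 2) : L ≤ Real.sqrt (W * Q) := by
  rcases eq_or_lt_of_le hQ with hQ0 | hQpos
  · -- Q = 0 : L ≤ 0
    have hL0 : L ≤ 0 := by
      have hle : ∀ ε : ℝ, 0 < ε → L ≤ 0 + ε := by
        intro ε hε
        have ht : (0:ℝ) < 2 * ε / (W + 1) := div_pos (by linarith) (by linarith)
        have := h _ ht
        rw [← hQ0] at this
        have hW1 : W ≤ W + 1 := by linarith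
        have : L ≤ (2 * ε / (W + 1) * W + 0) / 2 := by simpa using this
        have h2 : 2 * ε / (W + 1) * W ≤ 2 * ε := by
          rw [div_mul_eq_mul_div, div_le_iff₀ (by linarith : (0:ℝ) < W + 1)]
          nlinarith
        linarith
      exact le_of_forall_pos_le_add hle
    calc L ≤ 0 := hL0
      _ ≤ Real.sqrt (W * Q) := Real.sqrt_nonneg _
  rcases eq_or_lt_of_le hW with hW0 | hWpos
  · -- W = 0 : L ≤ 0
    have hL0 : L ≤ 0 := by
      have hle : ∀ ε : ℝ, 0 < ε → L ≤ 0 + ε := by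
        intro ε hε
        have ht : (0:ℝ) < Q / ε := div_pos hQpos hε
        have := h _ ht
        rw [← hW0] at this
        have hqq : Q / (Q / ε) = ε := by field_simp
        rw [hqq] at this
        simp at this
        linarith
      exact le_of_forall_pos_le_add hle
    calc L ≤ 0 := hL0
      _ ≤ Real.sqrt (W * Q) := Real.sqrt_nonneg _
  · have hWQ : 0 < W * Q := mul_pos hWpos hQpos
    have hspos : 0 < Real.sqrt (W * Q) := Real.sqrt_pos.mpr hWQ
    have hs2 : Real.sqrt (W * Q) * Real.sqrt (W * Q) = W * Q := Real.mul_self_sqrt hWQ.le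
    have ht : (0:ℝ) < Real.sqrt (W * Q) / W := div_pos hspos hWpos
    have hh := h _ ht
    have h1 : Real.sqrt (W * Q) / W * W = Real.sqrt (W * Q) :=
      div_mul_cancel₀ _ (ne_of_gt hWpos)
    have h2 : Q / (Real.sqrt (W * Q) / W) = Real.sqrt (W * Q) := by
      rw [div_div_eq_mul_div, div_eq_iff (ne_of_gt hspos), hs2]; ring
    calc L ≤ (Real.sqrt (W * Q) / W * W + Q / (Real.sqrt (W * Q) / W)) / 2 := hh
      _ = Real.sqrt (W * Q) := by rw [h1, h2]; ring

set_option maxHeartbeats 1000000 in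
/-- under `(A₁)` and `(A₂′)`, `ℋ ↪ L¹(V)` continuously: there is
`C > 0` with `∑_x μ(x)|u(x)| ≤ C ‖u‖_ℋ` for every `u ∈ ℋ`. -/
theorem L1_embedding
    {V : Type*} [Countable V] (Adj : V → V → Prop) (ω : V → V → ℝ) (μ a : V → ℝ)
    (μmin : ℝ) (hμmin : 0 < μmin) (hμ : ∀ x, μmin ≤ μ x)
    (hG : GoodGraph Adj ω)
    (hA1 : ∃ a₀ : ℝ, -1 < a₀ ∧ a₀ < 0 ∧ ∀ x, a₀ ≤ a x)
    (hA2' : ∃ M₀ : ℝ, 0 < M₀ ∧ Summable (fun x : {x : V // a x ≤ M₀} => μ x.1) ∧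
      Summable (fun x : {x : V // M₀ < a x} => μ x.1 / a x.1)) :
    ∃ C : ℝ, 0 < C ∧ ∀ u : V → ℝ, memH μ ω Adj a u →
      Summable (fun x => μ x * |u x|) ∧
      (∑' x, μ x * |u x|) ≤ C * normH μ ω Adj a u := by
  obtain ⟨a₀, ha₀m1, ha₀0, ha₀⟩ := hA1
  obtain ⟨M₀, hM₀, hSD, hSC⟩ := hA2'
  set c1 : ℝ := a₀ + 1 with hc1def
  have hc1 : 0 < c1 := by simp only [hc1def]; linarith
  have hμpos : ∀ x, 0 < μ x := fun x => lt_of_lt_of_le hμmin (hμ x)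
  set w : V → ℝ := fun x => if a x ≤ M₀ then μ x else μ x / a x with hwdef
  have hwpos : ∀ x, 0 < w x := by
    intro x
    simp only [hwdef]
    by_cases hx : a x ≤ M₀
    · rw [if_pos hx]; exact hμpos x
    · rw [if_neg hx]
      exact div_pos (hμpos x) (lt_trans hM₀ (not_le.mp hx))
  have hwsum : Summable w := by
    rw [← summable_subtype_and_compl (s := {x : V | a x ≤ M₀})]
    constructor
    · exact hSD.congr (fun i => by simp only [hwdef]; rw [if_pos i.2])
    · have h2 : Summable (fun x : {x : V // M₀ < a x} => w x.1) :=
        hSC.congr (fun i => by simp only [hwdef]; rw [if_neg (not_le.mpr i.2)])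
      have h3 := ((Equiv.subtypeEquivRight (fun x => not_le)).summable_iff
        (f := fun x : {x : V // M₀ < a x} => w x.1)).mpr h2
      exact h3.congr (fun i => by
        simp only [Function.comp_apply, Equiv.subtypeEquivRight_apply])
  set W : ℝ := ∑' x, w x with hWdef
  have hW0 : 0 ≤ W := tsum_nonneg fun x => (hwpos x).le
  set C₂ : ℝ := 1 / c1 + 1 with hC₂def
  have hC₂pos : 0 < C₂ := by
    have : 0 < 1 / c1 := one_div_pos.mpr hc1
    simp only [hC₂def]; linarith
  have hC₂1 : 1 ≤ C₂ := by
    have : 0 < 1 / c1 := one_div_pos.mpr hc1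
    simp only [hC₂def]; linarith
  refine ⟨Real.sqrt (W * C₂) + 1, by positivity, ?_⟩
  intro u hu
  have hgrad : ∀ x, 0 ≤ gradSq μ ω Adj u x := by
    intro x
    unfold gradSq
    apply mul_nonneg
    · exact le_of_lt (div_pos one_pos (by linarith [hμpos x]))
    · unfold nbrSum
      exact tsum_nonneg fun y => mul_nonneg (hG.2.2.1 x y.1 y.2).le (sq_nonneg _)
  set f : V → ℝ := fun x => μ x * (gradSq μ ω Adj u x + (a x + 1) * u x ^ 2) with hfdef
  have hfkey : ∀ x, c1 * (μ x * u x ^ 2) ≤ f x := by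
    intro x
    simp only [hfdef]
    have h1 := hgrad x
    have h2 := hμpos x
    have h3 := ha₀ x
    nlinarith [mul_nonneg h2.le h1, mul_nonneg h2.le (sq_nonneg (u x)),
      mul_nonneg (mul_nonneg h2.le (sq_nonneg (u x))) (by linarith : (0:ℝ) ≤ a x - a₀)]
  have hf0 : ∀ x, 0 ≤ f x := by
    intro x
    have := hfkey x
    nlinarith [mul_nonneg (hμpos x).le (sq_nonneg (u x))]
  have hfsum : Summable f :=
    (hu.1.add hu.2).congr (fun x => by simp only [hfdef]; ring)
  set S : ℝ := ∑' x, f x with hSdef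
  have hS0 : 0 ≤ S := tsum_nonneg fun x => hf0 x
  have hnormH : normH μ ω Adj a u = Real.sqrt S := rfl
  set q : V → ℝ := fun x => if a x ≤ M₀ then μ x * u x ^ 2 else μ x * (a x * u x ^ 2)
    with hqdef
  have hq0 : ∀ x, 0 ≤ q x := by
    intro x
    simp only [hqdef]
    by_cases hx : a x ≤ M₀
    · rw [if_pos hx]; exact mul_nonneg (hμpos x).le (sq_nonneg _)
    · rw [if_neg hx]
      exact mul_nonneg (hμpos x).le
        (mul_nonneg (lt_trans hM₀ (not_le.mp hx)).le (sq_nonneg _))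
  have hc1inv : c1 * (1 / c1) = 1 := mul_one_div_cancel (ne_of_gt hc1)
  have hqle : ∀ x, q x ≤ C₂ * f x := by
    intro x
    simp only [hqdef]
    by_cases hx : a x ≤ M₀
    · rw [if_pos hx]
      have h1 := hfkey x
      have h2 := hf0 x
      have h3 : 0 < 1 / c1 := one_div_pos.mpr hc1
      have h5 : μ x * u x ^ 2 ≤ (1 / c1) * f x := by
        have h4 := mul_le_mul_of_nonneg_left h1 h3.le
        have h6 : (1 / c1) * (c1 * (μ x * u x ^ 2)) = μ x * u x ^ 2 := by
          field_simp
        linarith [h4, h6.symm.le, h6.le]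
      calc μ x * u x ^ 2 ≤ 1 / c1 * f x := h5
        _ ≤ C₂ * f x := by
            apply mul_le_mul_of_nonneg_right _ h2
            simp only [hC₂def]; linarith
    · rw [if_neg hx]
      have h1 : μ x * (a x * u x ^ 2) ≤ f x := by
        simp only [hfdef]
        nlinarith [mul_nonneg (hμpos x).le (hgrad x),
          mul_nonneg (hμpos x).le (sq_nonneg (u x))]
      have h2 := hf0 x
      nlinarith
  have hqsum : Summable q :=
    Summable.of_nonneg_of_le hq0 hqle (hfsum.mul_left C₂)
  set Q : ℝ := ∑' x, q x with hQdef
  have hQ0 : 0 ≤ Q := tsum_nonneg fun x => hq0 x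
  have hQle : Q ≤ C₂ * S := by
    have := Summable.tsum_le_tsum hqle hqsum (hfsum.mul_left C₂)
    rwa [tsum_mul_left] at this
  have hpt : ∀ t : ℝ, 0 < t → ∀ x, μ x * |u x| ≤ (t * w x + q x / t) / 2 := by
    intro t ht x
    have h2t : (0:ℝ) < 2 * t := by linarith
    have hrw : (t * w x + q x / t) / 2 = (t * (t * w x) + q x) / (2 * t) := by
      field_simp
    rw [hrw, le_div_iff₀ h2t]
    simp only [hwdef, hqdef]
    rw [← sq_abs (u x)]
    by_cases hx : a x ≤ M₀
    · rw [if_pos hx, if_pos hx]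
      nlinarith [mul_nonneg (hμpos x).le (sq_nonneg (t - |u x|))]
    · rw [if_neg hx, if_neg hx]
      have hax : 0 < a x := lt_trans hM₀ (not_le.mp hx)
      refine le_of_mul_le_mul_right ?_ hax
      have hcancel : (t * (t * (μ x / a x)) + μ x * (a x * |u x| ^ 2)) * a x
          = t * (t * μ x) + μ x * (a x * |u x| ^ 2) * a x := by
        field_simp
      rw [hcancel]
      nlinarith [mul_nonneg (hμpos x).le (sq_nonneg (t - a x * |u x|))]
  have hsum1 : Summable (fun x => μ x * |u x|) := by
    apply Summable.of_nonneg_of_le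
      (fun x => mul_nonneg (hμpos x).le (abs_nonneg _))
      (fun x => hpt 1 one_pos x)
    exact ((hwsum.mul_left 1).add (hqsum.div_const 1)).div_const 2
  refine ⟨hsum1, ?_⟩
  have hL : ∀ t : ℝ, 0 < t → (∑' x, μ x * |u x|) ≤ (t * W + Q / t) / 2 := by
    intro t ht
    have hRsum : Summable (fun x => (t * w x + q x / t) / 2) :=
      ((hwsum.mul_left t).add (hqsum.div_const t)).div_const 2
    calc (∑' x, μ x * |u x|) ≤ ∑' x, (t * w x + q x / t) / 2 :=
          Summable.tsum_le_tsum (hpt t ht) hsum1 hRsum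
      _ = (t * W + Q / t) / 2 := by
          rw [tsum_div_const, Summable.tsum_add (hwsum.mul_left t) (hqsum.div_const t),
            tsum_mul_left, tsum_div_const]
  have hmain := amgm_aux hW0 hQ0 hL
  have h1 : Real.sqrt (W * Q) ≤ Real.sqrt (W * C₂) * Real.sqrt S := by
    rw [← Real.sqrt_mul (mul_nonneg hW0 hC₂pos.le)]
    apply Real.sqrt_le_sqrt
    calc W * Q ≤ W * (C₂ * S) := mul_le_mul_of_nonneg_left hQle hW0
      _ = W * C₂ * S := by ring
  rw [hnormH]
  calc (∑' x, μ x * |u x|) ≤ Real.sqrt (W * Q) := hmain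
    _ ≤ Real.sqrt (W * C₂) * Real.sqrt S := h1
    _ ≤ (Real.sqrt (W * C₂) + 1) * Real.sqrt S := by
        nlinarith [Real.sqrt_nonneg S, Real.sqrt_nonneg (W * C₂)]
end
end

section
/- Let V = ℕ (including 0) with edges joining n and n+1 for each n, all edge weights ω = 1, and measure μ(0) = 1, μ(n) = n for n ≥ 1. Define u:V→ℝ by u(n) = 1/(n·log n) for n ≥ 3 and u(n) = 0 for n ≤ 2. Then u ∈ H¹(V), i.e. ∑_{n∈V} μ(n)u(n)² < ∞ and ∑_{n∈V} μ(n)|∇u|²(n) < ∞, but ∑_{n∈V} μ(n)·u(n)²·log u(n)² = −∞ (the sum diverges to −∞). -/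
open Filter Real Topology

noncomputable section

private lemma tele_sum (f : ℕ → ℝ) (N : ℕ) :
    ∑ n ∈ Finset.range N, (f n - f (n + 1)) = f 0 - f N := by
  induction N with
  | zero => simp
  | succ N ih => rw [Finset.sum_range_succ, ih]; ring

private lemma log_gt_one {x : ℝ} (hx : 3 ≤ x) : 1 < Real.log x := by
  rw [Real.lt_log_iff_exp_lt (by linarith)]
  calc Real.exp 1 < 2.7182818286 := Real.exp_one_lt_d9
  _ ≤ x := by linarith

private lemma gap_lb {x : ℝ} (hx : 3 ≤ x) :
    1 / (x + 1) ≤ Real.log (x + 1) - Real.log x := by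
  have h0 : (0:ℝ) < x := by linarith
  have h := Real.log_le_sub_one_of_pos (show (0:ℝ) < x / (x+1) by positivity)
  rw [Real.log_div (by linarith) (by linarith)] at h
  have : x / (x + 1) - 1 = -(1 / (x + 1)) := by field_simp; ring
  linarith [this ▸ h]

private lemma gap_ub {x : ℝ} (hx : 3 ≤ x) :
    Real.log (x + 1) - Real.log x ≤ 1 / x := by
  have h0 : (0:ℝ) < x := by linarith
  have h := Real.log_le_sub_one_of_pos (show (0:ℝ) < (x+1) / x by positivity)
  rw [Real.log_div (by linarith) (by linarith)] at h
  have : (x + 1) / x - 1 = 1 / x := by field_simp; ring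
  linarith [this ▸ h]

private lemma logp1_le {x : ℝ} (hx : 3 ≤ x) :
    Real.log (x + 1) ≤ 2 * Real.log x := by
  have h1 : x + 1 ≤ x ^ 2 := by nlinarith
  have := Real.log_le_log (by linarith : (0:ℝ) < x + 1) h1
  rwa [Real.log_pow, Nat.cast_ofNat] at this

private lemma helper1 {x : ℝ} (hx : 3 ≤ x) :
    x * (1 / (x * Real.log x)) ^ 2
      ≤ 4 * (1 / Real.log x - 1 / Real.log (x + 1)) := by
  set L := Real.log x with hLdef
  set L' := Real.log (x + 1) with hL'def
  have hL : 1 < L := log_gt_one hx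
  have hmono : L ≤ L' := Real.log_le_log (by linarith) (by linarith)
  have hL' : 1 < L' := lt_of_lt_of_le hL hmono
  have h0 : (0:ℝ) < x := by linarith
  have hgap : 1 / (x + 1) ≤ L' - L := gap_lb hx
  have hgap' : 1 ≤ (L' - L) * (x + 1) := by
    rw [div_le_iff₀ (by linarith)] at hgap; linarith
  have hub : L' ≤ 2 * L := logp1_le hx
  have hlhs : x * (1 / (x * L)) ^ 2 = 1 / (x * L ^ 2) := by
    field_simp
  have hrhs : 4 * (1 / L - 1 / L') = 4 * (L' - L) / (L * L') := by
    field_simp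
  rw [hlhs, hrhs, div_le_div_iff₀ (by positivity) (by positivity)]
  nlinarith [mul_le_mul_of_nonneg_left hgap' (mul_pos (mul_pos two_pos (mul_pos (by linarith : (0:ℝ) < L) (by linarith : (0:ℝ) < L))) h0).le,
    mul_le_mul_of_nonneg_left hub (by linarith : (0:ℝ) ≤ L),
    mul_nonneg (sub_nonneg.2 hmono) (sq_nonneg L)]

private lemma helper2 {x : ℝ} (hx : 3 ≤ x) :
    x * ((1 / (x * Real.log x)) ^ 2 *
        (-2 * (Real.log x + Real.log (Real.log x))))
      ≤ -2 * (Real.log (Real.log (x + 1)) - Real.log (Real.log x)) := by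
  set L := Real.log x with hLdef
  set L' := Real.log (x + 1) with hL'def
  have hL : 1 < L := log_gt_one hx
  have hmono : L ≤ L' := Real.log_le_log (by linarith) (by linarith)
  have hL' : 1 < L' := lt_of_lt_of_le hL hmono
  have h0 : (0:ℝ) < x := by linarith
  have hℓ : 0 < Real.log L := Real.log_pos hL
  have hgap : L' - L ≤ 1 / x := gap_ub hx
  -- log L' - log L ≤ (L' - L)/L
  have h1 : Real.log L' - Real.log L ≤ (L' - L) / L := by
    have h := Real.log_le_sub_one_of_pos (show (0:ℝ) < L' / L by positivity)
    rw [Real.log_div (by linarith) (by linarith)] at h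
    have : L' / L - 1 = (L' - L) / L := by field_simp
    linarith [this ▸ h]
  have h2 : (L' - L) / L ≤ (1 / x) / L := by gcongr
  have hkey : Real.log L' - Real.log L ≤ 1 / (x * L) := by
    calc Real.log L' - Real.log L ≤ (L' - L) / L := h1
    _ ≤ (1 / x) / L := h2
    _ = 1 / (x * L) := by rw [div_div]
  have hstep : 1 / (x * L) ≤ (L + Real.log L) / (x * L ^ 2) := by
    rw [div_le_div_iff₀ (by positivity) (by positivity)]
    nlinarith [mul_pos (mul_pos h0 (show (0:ℝ) < L by linarith)) hℓ]
  have hA : Real.log L' - Real.log L ≤ (L + Real.log L) / (x * L ^ 2) :=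
    hkey.trans hstep
  have heq : x * ((1 / (x * L)) ^ 2 * (-2 * (L + Real.log L)))
      = -2 * ((L + Real.log L) / (x * L ^ 2)) := by
    field_simp
  rw [heq]
  linarith

/-- on the graph `ℕ` with edges between consecutive integers,
unit weights, measure `μ(0)=1`, `μ(n)=n` for `n ≥ 1`, the function
`u(n) = 1/(n log n)` for `n ≥ 3`, `u(n)=0` for `n ≤ 2`, belongs to `H¹(V)`
but `∑ μ(n) u(n)² log u(n)² = −∞`. -/
theorem example_H1_log_not_integrable
    (μ u gsq : ℕ → ℝ)
    (hμ0 : μ 0 = 1) (hμ : ∀ n : ℕ, 1 ≤ n → μ n = (n : ℝ))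
    (hu : ∀ n : ℕ, 3 ≤ n → u n = 1 / ((n : ℝ) * Real.log (n : ℝ)))
    (hu' : ∀ n : ℕ, n ≤ 2 → u n = 0)
    (hgsq0 : gsq 0 = (1 / (2 * μ 0)) * (u 1 - u 0) ^ 2)
    (hgsq : ∀ n : ℕ, 1 ≤ n →
      gsq n = (1 / (2 * μ n)) * ((u (n + 1) - u n) ^ 2 + (u (n - 1) - u n) ^ 2)) :
    Summable (fun n => μ n * u n ^ 2) ∧
    Summable (fun n => μ n * gsq n) ∧
    Tendsto (fun N => ∑ n ∈ Finset.range N, μ n * (u n ^ 2 * Real.log (u n ^ 2)))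
      atTop atBot := by
  have hN3 : ∀ n : ℕ, 3 ≤ n → (3:ℝ) ≤ (n:ℝ) := fun n hn => by exact_mod_cast hn
  have hu0 : u 0 = 0 := hu' 0 (by norm_num)
  have hu1 : u 1 = 0 := hu' 1 (by norm_num)
  have hμnonneg : ∀ n, 0 ≤ μ n := by
    intro n
    rcases Nat.eq_zero_or_pos n with h | h
    · simp [h, hμ0]
    · rw [hμ n h]; positivity
  have hμ1 : ∀ n, 1 ≤ μ n := by
    intro n
    rcases Nat.eq_zero_or_pos n with h | h
    · simp [h, hμ0]
    · rw [hμ n h]; exact_mod_cast h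
  have hlog3 : 0 < Real.log 3 := Real.log_pos (by norm_num)
  -- Part 1
  set f : ℕ → ℝ := fun n => 1 / Real.log (max (n:ℝ) 3) with hf
  have hfval : ∀ n : ℕ, 3 ≤ n → f n = 1 / Real.log (n:ℝ) := by
    intro n hn; simp only [hf]; rw [max_eq_left (hN3 n hn)]
  have hf3 : ∀ n : ℕ, n ≤ 3 → f n = 1 / Real.log 3 := by
    intro n hn; simp only [hf]
    rw [max_eq_right (by exact_mod_cast hn)]
  have hfnonneg : ∀ n, 0 ≤ f n := by
    intro n
    have h3 : 0 < Real.log (max (n:ℝ) 3) :=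
      Real.log_pos (lt_of_lt_of_le (by norm_num) (le_max_right _ _))
    positivity
  have hbd1 : ∀ n : ℕ, μ n * u n ^ 2 ≤ 4 * (f n - f (n + 1)) := by
    intro n
    rcases le_or_gt n 2 with h | h
    · rw [hu' n h, hf3 n (by omega), hf3 (n+1) (by omega)]
      simp
    · have hn : 3 ≤ n := h
      rw [hμ n (by omega), hu n hn, hfval n hn, hfval (n+1) (by omega)]
      push_cast
      exact helper1 (hN3 n hn)
  have hnonneg1 : ∀ n, 0 ≤ μ n * u n ^ 2 :=
    fun n => mul_nonneg (hμnonneg n) (sq_nonneg _)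
  have hsum1 : Summable (fun n => μ n * u n ^ 2) := by
    apply summable_of_sum_range_le (c := 4 * (1 / Real.log 3)) hnonneg1
    intro N
    calc ∑ n ∈ Finset.range N, μ n * u n ^ 2
        ≤ ∑ n ∈ Finset.range N, 4 * (f n - f (n + 1)) :=
          Finset.sum_le_sum fun i _ => hbd1 i
      _ = 4 * (f 0 - f N) := by rw [← Finset.mul_sum, tele_sum]
      _ ≤ 4 * (1 / Real.log 3) := by
          have h0 := hf3 0 (by omega)
          have hN := hfnonneg N
          rw [h0]; linarith
  refine ⟨hsum1, ?_, ?_⟩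
  · -- Part 2
    have hsq : Summable (fun n => u n ^ 2) := by
      refine Summable.of_nonneg_of_le (fun n => sq_nonneg _) (fun n => ?_) hsum1
      nlinarith [hμ1 n, sq_nonneg (u n)]
    have h1 : Summable (fun n => u (n + 1) ^ 2) := (summable_nat_add_iff 1).mpr hsq
    have hm1 : Summable (fun n => u (n - 1) ^ 2) :=
      (summable_nat_add_iff (f := fun n => u (n - 1) ^ 2) 1).mp (by simpa using hsq)
    have hb : Summable (fun n => u (n + 1) ^ 2 + 2 * u n ^ 2 + u (n - 1) ^ 2) :=
      (h1.add (hsq.mul_left 2)).add hm1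
    refine Summable.of_nonneg_of_le (fun n => ?_) (fun n => ?_) hb
    · rcases Nat.eq_zero_or_pos n with h | h
      · subst h; simp [hgsq0, hμ0, hu0, hu1]
      · rw [hgsq n h, hμ n h]
        have hx : (0:ℝ) < (n:ℝ) := by exact_mod_cast h
        have h1 : (0:ℝ) ≤ 1 / (2 * (n:ℝ)) := by positivity
        have h2 : (0:ℝ) ≤ (u (n+1) - u n) ^ 2 + (u (n-1) - u n) ^ 2 := by positivity
        exact mul_nonneg hx.le (mul_nonneg h1 h2)
    · rcases Nat.eq_zero_or_pos n with h | h
      · subst h; simp [hgsq0, hμ0, hu0, hu1]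
      · rw [hgsq n h, hμ n h]
        have hx : (n:ℝ) ≠ 0 := Nat.cast_ne_zero.mpr (by omega)
        have key : (n:ℝ) * ((1 / (2 * (n:ℝ))) *
            ((u (n+1) - u n) ^ 2 + (u (n-1) - u n) ^ 2))
            = ((u (n+1) - u n) ^ 2 + (u (n-1) - u n) ^ 2) / 2 := by
          field_simp
        rw [key]
        nlinarith [sq_nonneg (u (n+1) + u n), sq_nonneg (u (n-1) + u n)]
  · -- Part 3
    set g : ℕ → ℝ := fun n => Real.log (Real.log (max (n:ℝ) 3)) with hg
    have hgval : ∀ n : ℕ, 3 ≤ n → g n = Real.log (Real.log (n:ℝ)) := by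
      intro n hn; simp only [hg]; rw [max_eq_left (hN3 n hn)]
    have hg3 : ∀ n : ℕ, n ≤ 3 → g n = Real.log (Real.log 3) := by
      intro n hn; simp only [hg]
      rw [max_eq_right (by exact_mod_cast hn)]
    have hbd3 : ∀ n : ℕ, μ n * (u n ^ 2 * Real.log (u n ^ 2))
        ≤ -2 * (g (n + 1) - g n) := by
      intro n
      rcases le_or_gt n 2 with h | h
      · rw [hu' n h, hg3 n (by omega), hg3 (n+1) (by omega)]
        simp
      · have hn : 3 ≤ n := h
        have hx3 : (3:ℝ) ≤ (n:ℝ) := hN3 n hn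
        have hL : 1 < Real.log (n:ℝ) := log_gt_one hx3
        have hxne : ((n:ℝ)) ≠ 0 := Nat.cast_ne_zero.mpr (by omega)
        have hLne : Real.log (n:ℝ) ≠ 0 := by linarith
        have hlog : Real.log ((1 / ((n:ℝ) * Real.log (n:ℝ))) ^ 2)
            = -2 * (Real.log (n:ℝ) + Real.log (Real.log (n:ℝ))) := by
          rw [Real.log_pow, one_div, Real.log_inv, Real.log_mul hxne hLne]
          push_cast; ring
        rw [hμ n (by omega), hu n hn, hlog, hgval (n+1) (by omega), hgval n hn]
        push_cast
        exact helper2 hx3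
    have hS : ∀ N, ∑ n ∈ Finset.range N, μ n * (u n ^ 2 * Real.log (u n ^ 2))
        ≤ 2 * (g 0 - g N) := by
      intro N
      calc ∑ n ∈ Finset.range N, μ n * (u n ^ 2 * Real.log (u n ^ 2))
          ≤ ∑ n ∈ Finset.range N, -2 * (g (n + 1) - g n) :=
            Finset.sum_le_sum fun i _ => hbd3 i
        _ = ∑ n ∈ Finset.range N, 2 * (g n - g (n + 1)) := by
            apply Finset.sum_congr rfl; intros; ring
        _ = 2 * (g 0 - g N) := by rw [← Finset.mul_sum, tele_sum]
    have hgtop : Tendsto (fun N : ℕ => g N) atTop atTop := by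
      have hmax : Tendsto (fun N : ℕ => max (N:ℝ) 3) atTop atTop :=
        tendsto_atTop_mono (fun N => le_max_left _ _) tendsto_natCast_atTop_atTop
      exact Real.tendsto_log_atTop.comp (Real.tendsto_log_atTop.comp hmax)
    have hfin : Tendsto (fun N : ℕ => 2 * (g 0 - g N)) atTop atBot := by
      have h2 : Tendsto (fun N : ℕ => 2 * g N) atTop atTop :=
        hgtop.const_mul_atTop two_pos
      have h3 : Tendsto (fun N : ℕ => -(2 * g N)) atTop atBot :=
        tendsto_neg_atTop_atBot.comp h2
      have h4 := tendsto_atBot_add_const_left atTop (2 * g 0) h3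
      refine h4.congr fun N => by ring
    exact tendsto_atBot_mono hS hfin
end
end
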